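/- arXiv:1404.7660 — 14 statements merged into one kernel-verified Lean document; each statement's English description precedes it below -/
import Mathlib

section
/- Let f ∈ P(I), a, b ∈ I with a < b, and suppose f is integrable on [a,b]. Then f((a+b)/2) ≤ (2/(b-a)) ∫_a^b f(x) dx ≤ 2[f(a) + f(b)]. -/
/-!
Every point of `[a, b]` is a convex combination of `a` and `b`, so `f ≤ f a + f b` there; and
`x` and its reflection `a + b - x` have midpoint `(a + b) / 2`, so
`f ((a + b) / 2) ≤ f x + f (a + b - x)`. Integrating these two bounds over `[a, b]`, the second
one using that the reflection preserves the integral, gives the two inequalities.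
-/

open MeasureTheory Set Real

/-- `g` is a `P`-function on the set `s`: it is nonnegative on `s` and
`g (t*x + (1-t)*y) ≤ g x + g y` for all `x, y ∈ s` and `t ∈ [0,1]`. -/
def IsPFunctionOn (g : ℝ → ℝ) (s : Set ℝ) : Prop :=
  (∀ x ∈ s, 0 ≤ g x) ∧
    ∀ x ∈ s, ∀ y ∈ s, ∀ t ∈ Set.Icc (0:ℝ) 1, g (t * x + (1 - t) * y) ≤ g x + g y

namespace IsPFunctionOn

variable {f : ℝ → ℝ} {s : Set ℝ}

theorem apply_le_add_of_mem_uIcc (hf : IsPFunctionOn f s) {x y z : ℝ} (hx : x ∈ s) (hy : y ∈ s)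
    (hz : z ∈ uIcc x y) : f z ≤ f x + f y := by
  rw [← segment_eq_uIcc] at hz
  obtain ⟨t, u, ht, hu, htu, rfl⟩ := hz
  obtain rfl : u = 1 - t := by linarith
  exact hf.2 x hx y hy t ⟨ht, by linarith⟩

theorem apply_midpoint_le_add_apply_reflect (hf : IsPFunctionOn f s) {x y z : ℝ} (hz : z ∈ s)
    (hz' : x + y - z ∈ s) : f ((x + y) / 2) ≤ f z + f (x + y - z) := by
  have h := hf.2 z hz (x + y - z) hz' (1 / 2) ⟨by norm_num, by norm_num⟩
  rwa [show (1 / 2 : ℝ) * z + (1 - 1 / 2) * (x + y - z) = (x + y) / 2 by ring] at h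

theorem integral_le_mul_add (hf : IsPFunctionOn f s) {a b : ℝ} (ha : a ∈ s) (hb : b ∈ s)
    (hab : a ≤ b) (hint : IntervalIntegrable f volume a b) :
    ∫ x in a..b, f x ≤ (b - a) * (f a + f b) := by
  have hbound : ∀ x ∈ Icc a b, f x ≤ f a + f b := fun x hx =>
    hf.apply_le_add_of_mem_uIcc ha hb (Icc_subset_uIcc hx)
  simpa [mul_add] using intervalIntegral.integral_mono_on hab hint intervalIntegrable_const hbound

theorem mul_apply_midpoint_le_two_mul_integral (hf : IsPFunctionOn f s) {a b : ℝ}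
    (hs : Icc a b ⊆ s) (hab : a ≤ b) (hint : IntervalIntegrable f volume a b) :
    (b - a) * f ((a + b) / 2) ≤ 2 * ∫ x in a..b, f x := by
  have hint_reflect : IntervalIntegrable (fun x => f (a + b - x)) volume a b := by
    simpa using (hint.comp_sub_left (a + b)).symm
  have hreflect : ∫ x in a..b, f (a + b - x) = ∫ x in a..b, f x := by simp
  have hbound : ∀ x ∈ Icc a b, f ((a + b) / 2) ≤ f x + f (a + b - x) := fun x hx =>
    hf.apply_midpoint_le_add_apply_reflect (hs hx) (hs ⟨by linarith [hx.2], by linarith [hx.1]⟩)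
  have h := intervalIntegral.integral_mono_on hab intervalIntegrable_const
    (hint.add hint_reflect) hbound
  rw [intervalIntegral.integral_const, intervalIntegral.integral_add hint hint_reflect,
    hreflect, smul_eq_mul] at h
  linarith

end IsPFunctionOn

theorem stmt_1 (I : Set ℝ) (hI : Convex ℝ I) (f : ℝ → ℝ)
    (hP : IsPFunctionOn f I)
    (a b : ℝ) (ha : a ∈ I) (hb : b ∈ I) (hab : a < b)
    (hint : IntervalIntegrable f MeasureTheory.volume a b) :
    f ((a + b) / 2) ≤ (2 / (b - a)) * ∫ x in a..b, f x ∧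
      (2 / (b - a)) * ∫ x in a..b, f x ≤ 2 * (f a + f b) := by
  have hba : 0 < b - a := sub_pos.mpr hab
  have hmid := hP.mul_apply_midpoint_le_two_mul_integral (hI.ordConnected.out ha hb) hab.le hint
  have hends := hP.integral_le_mul_add ha hb hab.le hint
  rw [div_mul_eq_mul_div, le_div_iff₀ hba, div_le_iff₀ hba]
  constructor <;> linarith
end

section
/- Let f : I ⊆ ℝ → ℝ be differentiable on I° with f' integrable on [a,b], where a, b ∈ I° with a < b, let α, λ ∈ [0,1], and let q ≥ 1. Suppose |f'|^q is a P-function on [a,b]. Define I_f(λ,α,a,b) = λ(α f(a) + (1-α) f(b)) + (1-λ) f(α a + (1-α) b) - (1/(b-a)) ∫_a^b f(x) dx, γ₁(α,λ) = (1-α)[αλ - (1-α)/2], and γ₂(α,λ) = (αλ)² - γ₁(α,λ). Then |I_f(λ,α,a,b)| ≤ (b-a)(|f'(b)|^q + |f'(a)|^q)^{1/q} · C, where C = γ₂(α,λ) + γ₂(1-α,λ) if αλ ≤ 1-α ≤ 1-λ(1-α); C = γ₂(α,λ) + γ₁(1-α,λ) if αλ ≤ 1-λ(1-α) ≤ 1-α;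 and C = γ₁(α,λ) + γ₂(1-α,λ) if 1-α ≤ αλ ≤ 1-λ(1-α). -/
open MeasureTheory Set Real

/-- `γ₁(α,λ) = (1-α)[αλ - (1-α)/2]`. -/
noncomputable def gamma1 (α lam : ℝ) : ℝ := (1 - α) * (α * lam - (1 - α) / 2)

/-- `γ₂(α,λ) = (αλ)² - γ₁(α,λ)`. -/
noncomputable def gamma2 (α lam : ℝ) : ℝ := (α * lam) ^ 2 - gamma1 α lam


open intervalIntegral in
lemma my_integral_id (u v : ℝ) : ∫ x in u..v, x = (v^2-u^2)/2 := integral_id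
lemma my_integral_const (u v c : ℝ) : ∫ _x in u..v, c = (v-u)*c := by
  rw [intervalIntegral.integral_const]; simp [smul_eq_mul]

lemma int_sub_eq (u v m : ℝ) : ∫ x in u..v, (x - m) = (v^2 - u^2)/2 - m*(v-u) := by
  rw [intervalIntegral.integral_sub intervalIntegral.intervalIntegrable_id (intervalIntegrable_const),
    my_integral_id, my_integral_const]
  ring

lemma int_sub_eq' (u v m : ℝ) : ∫ x in u..v, (m - x) = m*(v-u) - (v^2 - u^2)/2 := by
  rw [intervalIntegral.integral_sub (intervalIntegrable_const) intervalIntegral.intervalIntegrable_id,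
    my_integral_id, my_integral_const]
  ring

lemma int_abs_mid (u v m : ℝ) (h1 : u ≤ m) (h2 : m ≤ v) :
    ∫ x in u..v, |x - m| = ((m-u)^2 + (v-m)^2)/2 := by
  have hi : ∀ p r : ℝ, IntervalIntegrable (fun x => |x - m|) volume p r :=
    fun p r => ((continuous_id.sub continuous_const).abs).intervalIntegrable p r
  rw [← intervalIntegral.integral_add_adjacent_intervals (hi u m) (hi m v)]
  have e1 : (∫ x in u..m, |x - m|) = ∫ x in u..m, (m - x) := by
    apply intervalIntegral.integral_congr
    intro x hx
    rw [uIcc_of_le h1] at hx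
    show |x - m| = m - x
    rw [abs_of_nonpos (by linarith [hx.2] : x - m ≤ 0)]; ring
  have e2 : (∫ x in m..v, |x - m|) = ∫ x in m..v, (x - m) := by
    apply intervalIntegral.integral_congr
    intro x hx
    rw [uIcc_of_le h2] at hx
    show |x - m| = x - m
    rw [abs_of_nonneg (by linarith [hx.1] : (0:ℝ) ≤ x - m)]
  rw [e1, e2, int_sub_eq, int_sub_eq']; ring

lemma int_abs_right (u v m : ℝ) (h1 : u ≤ v) (h2 : v ≤ m) :
    ∫ x in u..v, |x - m| = ((m-u)^2 - (m-v)^2)/2 := by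
  have e1 : (∫ x in u..v, |x - m|) = ∫ x in u..v, (m - x) := by
    apply intervalIntegral.integral_congr
    intro x hx
    rw [uIcc_of_le h1] at hx
    show |x - m| = m - x
    rw [abs_of_nonpos (by linarith [hx.2] : x - m ≤ 0)]; ring
  rw [e1, int_sub_eq']; ring

lemma int_abs_left (u v m : ℝ) (h1 : m ≤ u) (h2 : u ≤ v) :
    ∫ x in u..v, |x - m| = ((v-m)^2 - (u-m)^2)/2 := by
  have e1 : (∫ x in u..v, |x - m|) = ∫ x in u..v, (x - m) := by
    apply intervalIntegral.integral_congr
    intro x hx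
    rw [uIcc_of_le h2] at hx
    show |x - m| = x - m
    rw [abs_of_nonneg (by linarith [hx.1] : (0:ℝ) ≤ x - m)]
  rw [e1, int_sub_eq]; ring


lemma main_bound (I : Set ℝ) (hI : Convex ℝ I) (f f' : ℝ → ℝ)
    (a b : ℝ) (ha : a ∈ interior I) (hb : b ∈ interior I) (hab : a < b)
    (hdf : ∀ x ∈ interior I, HasDerivAt f (f' x) x)
    (hint : IntervalIntegrable f' volume a b)
    (α lam : ℝ) (hα : α ∈ Icc (0:ℝ) 1) (hlam : lam ∈ Icc (0:ℝ) 1)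
    (q : ℝ) (hq : 1 ≤ q)
    (hP : (∀ x ∈ Icc a b, (0:ℝ) ≤ |f' x| ^ q) ∧
      ∀ x ∈ Icc a b, ∀ y ∈ Icc a b, ∀ t ∈ Icc (0:ℝ) 1,
        |f' (t * x + (1 - t) * y)| ^ q ≤ |f' x| ^ q + |f' y| ^ q) :
    |lam * (α * f a + (1 - α) * f b) + (1 - lam) * f (α * a + (1 - α) * b)
        - (1 / (b - a)) * ∫ x in a..b, f x|
      ≤ (1/(b-a)) * ((|f' b| ^ q + |f' a| ^ q) ^ (1/q)) *
        ((∫ x in a..(α*a+(1-α)*b), |x - (a + lam*α*(b-a))|)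
          + ∫ x in (α*a+(1-α)*b)..b, |x - (a + (1 - lam*(1-α))*(b-a))|) := by
  obtain ⟨hα0, hα1⟩ := hα
  obtain ⟨hl0, hl1⟩ := hlam
  have hba : (0:ℝ) < b - a := by linarith
  set c : ℝ := α*a+(1-α)*b with hc
  set m₁ : ℝ := a + lam*α*(b-a) with hm1
  set m₂ : ℝ := a + (1 - lam*(1-α))*(b-a) with hm2
  set M : ℝ := (|f' b| ^ q + |f' a| ^ q) ^ (1/q) with hM
  have hac : a ≤ c := by rw [hc]; nlinarith
  have hcb : c ≤ b := by rw [hc]; nlinarith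
  have hsub : Icc a b ⊆ interior I := (hI.interior.ordConnected).out ha hb
  have hderiv : ∀ x ∈ Icc a b, HasDerivAt f (f' x) x := fun x hx => hdf x (hsub hx)
  have hcont : ContinuousOn f (Icc a b) := fun x hx =>
    ((hderiv x hx).continuousAt).continuousWithinAt
  have hsub1 : uIcc a c ⊆ Icc a b := by
    rw [uIcc_of_le hac]; exact Icc_subset_Icc le_rfl hcb
  have hsub2 : uIcc c b ⊆ Icc a b := by
    rw [uIcc_of_le hcb]; exact Icc_subset_Icc hac le_rfl
  have hfi1 : IntervalIntegrable f volume a c := (hcont.mono hsub1).intervalIntegrable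
  have hfi2 : IntervalIntegrable f volume c b := (hcont.mono hsub2).intervalIntegrable
  have hfi1' : IntervalIntegrable f' volume a c := by
    apply hint.mono_set; rw [uIcc_of_le hab.le]; exact hsub1
  have hfi2' : IntervalIntegrable f' volume c b := by
    apply hint.mono_set; rw [uIcc_of_le hab.le]; exact hsub2
  have ibp1 : ∫ x in a..c, (x - m₁) * f' x
      = (c - m₁) * f c - (a - m₁) * f a - ∫ x in a..c, f x := by
    have h := intervalIntegral.integral_mul_deriv_eq_deriv_mul
      (u := fun x => x - m₁) (u' := fun _ => 1) (v := f) (v' := f') (a := a) (b := c)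
      (fun x _ => (hasDerivAt_id x).sub_const m₁)
      (fun x hx => hderiv x (hsub1 hx)) intervalIntegrable_const hfi1'
    simpa using h
  have ibp2 : ∫ x in c..b, (x - m₂) * f' x
      = (b - m₂) * f b - (c - m₂) * f c - ∫ x in c..b, f x := by
    have h := intervalIntegral.integral_mul_deriv_eq_deriv_mul
      (u := fun x => x - m₂) (u' := fun _ => 1) (v := f) (v' := f') (a := c) (b := b)
      (fun x _ => (hasDerivAt_id x).sub_const m₂)
      (fun x hx => hderiv x (hsub2 hx)) intervalIntegrable_const hfi2'
    simpa using h
  have hsplit : (∫ x in a..c, f x) + ∫ x in c..b, f x = ∫ x in a..b, f x :=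
    intervalIntegral.integral_add_adjacent_intervals hfi1 hfi2
  have hE : lam * (α * f a + (1 - α) * f b) + (1 - lam) * f c
      - (1 / (b - a)) * ∫ x in a..b, f x
      = (1/(b-a)) * ((∫ x in a..c, (x - m₁) * f' x) + ∫ x in c..b, (x - m₂) * f' x) := by
    rw [ibp1, ibp2, ← hsplit, hm1, hm2, hc]
    field_simp
    ring
  -- pointwise bound on |f'|
  have hq0 : q ≠ 0 := by linarith
  have hMbd : ∀ x ∈ Icc a b, |f' x| ≤ M := by
    intro x hx
    have ht : (x - a)/(b-a) ∈ Icc (0:ℝ) 1 := by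
      constructor
      · exact div_nonneg (by linarith [hx.1]) hba.le
      · rw [div_le_one hba]; linarith [hx.2]
    have hxx : ((x-a)/(b-a)) * b + (1 - (x-a)/(b-a)) * a = x := by
      field_simp
      ring
    have hPineq := hP.2 b (right_mem_Icc.mpr hab.le) a (left_mem_Icc.mpr hab.le) _ ht
    rw [hxx] at hPineq
    calc |f' x| = ((|f' x| ^ q) ^ (1/q)) := by
          rw [one_div, Real.rpow_rpow_inv (abs_nonneg _) hq0]
      _ ≤ M := by
          rw [hM]
          exact Real.rpow_le_rpow (Real.rpow_nonneg (abs_nonneg _) q) hPineq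
            (by positivity)
  have hM0 : 0 ≤ M := Real.rpow_nonneg (by positivity) _
  -- integrability of the kernels times f'
  have hk1 : IntervalIntegrable (fun x => (x - m₁) * f' x) volume a c :=
    hfi1'.continuousOn_mul ((continuous_id.sub continuous_const).continuousOn)
  have hk2 : IntervalIntegrable (fun x => (x - m₂) * f' x) volume c b :=
    hfi2'.continuousOn_mul ((continuous_id.sub continuous_const).continuousOn)
  have habs1 : IntervalIntegrable (fun x => |x - m₁| * |f' x|) volume a c := by
    have := hk1.abs
    simpa [abs_mul] using this
  have habs2 : IntervalIntegrable (fun x => |x - m₂| * |f' x|) volume c b := by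
    have := hk2.abs
    simpa [abs_mul] using this
  have bound : ∀ (u v m : ℝ), u ≤ v → Icc u v ⊆ Icc a b →
      IntervalIntegrable (fun x => (x - m) * f' x) volume u v →
      IntervalIntegrable (fun x => |x - m| * |f' x|) volume u v →
      |∫ x in u..v, (x - m) * f' x| ≤ (∫ x in u..v, |x - m|) * M := by
    intro u v m huv hIcc hki habsi
    calc |∫ x in u..v, (x - m) * f' x| ≤ ∫ x in u..v, |(x - m) * f' x| :=
          intervalIntegral.abs_integral_le_integral_abs huv
      _ = ∫ x in u..v, |x - m| * |f' x| := by simp only [abs_mul]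
      _ ≤ ∫ x in u..v, |x - m| * M := by
          apply intervalIntegral.integral_mono_on huv habsi
          · exact (((continuous_id.sub continuous_const).abs.mul
              continuous_const)).intervalIntegrable _ _
          · intro x hx
            exact mul_le_mul_of_nonneg_left (hMbd x (hIcc hx)) (abs_nonneg _)
      _ = (∫ x in u..v, |x - m|) * M := by
          rw [intervalIntegral.integral_mul_const]
  have b1 := bound a c m₁ hac (Icc_subset_Icc le_rfl hcb) hk1 habs1
  have b2 := bound c b m₂ hcb (Icc_subset_Icc hac le_rfl) hk2 habs2
  rw [hE, abs_mul, abs_of_pos (by positivity : (0:ℝ) < 1/(b-a))]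
  have htri : |(∫ x in a..c, (x - m₁) * f' x) + ∫ x in c..b, (x - m₂) * f' x|
      ≤ (∫ x in a..c, |x - m₁|) * M + (∫ x in c..b, |x - m₂|) * M := by
    calc _ ≤ |∫ x in a..c, (x - m₁) * f' x| + |∫ x in c..b, (x - m₂) * f' x| :=
          abs_add_le _ _
      _ ≤ _ := add_le_add b1 b2
  have h1b : (0:ℝ) ≤ 1/(b-a) := by positivity
  calc (1/(b-a)) * |(∫ x in a..c, (x - m₁) * f' x) + ∫ x in c..b, (x - m₂) * f' x|
      ≤ (1/(b-a)) * ((∫ x in a..c, |x - m₁|) * M + (∫ x in c..b, |x - m₂|) * M) :=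
        mul_le_mul_of_nonneg_left htri h1b
    _ = (1/(b-a)) * M * ((∫ x in a..c, |x - m₁|) + ∫ x in c..b, |x - m₂|) := by ring

theorem stmt_2 (I : Set ℝ) (hI : Convex ℝ I) (f f' : ℝ → ℝ)
    (a b : ℝ) (ha : a ∈ interior I) (hb : b ∈ interior I) (hab : a < b)
    (hdf : ∀ x ∈ interior I, HasDerivAt f (f' x) x)
    (hint : IntervalIntegrable f' MeasureTheory.volume a b)
    (α lam : ℝ) (hα : α ∈ Set.Icc (0:ℝ) 1) (hlam : lam ∈ Set.Icc (0:ℝ) 1)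
    (q : ℝ) (hq : 1 ≤ q)
    (hP : IsPFunctionOn (fun x => |f' x| ^ q) (Set.Icc a b)) :
    (α * lam ≤ 1 - α ∧ 1 - α ≤ 1 - lam * (1 - α) →
      |lam * (α * f a + (1 - α) * f b) + (1 - lam) * f (α * a + (1 - α) * b)
          - (1 / (b - a)) * ∫ x in a..b, f x|
        ≤ (b - a) * (|f' b| ^ q + |f' a| ^ q) ^ (1 / q)
            * (gamma2 α lam + gamma2 (1 - α) lam)) ∧
    (α * lam ≤ 1 - lam * (1 - α) ∧ 1 - lam * (1 - α) ≤ 1 - α →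
      |lam * (α * f a + (1 - α) * f b) + (1 - lam) * f (α * a + (1 - α) * b)
          - (1 / (b - a)) * ∫ x in a..b, f x|
        ≤ (b - a) * (|f' b| ^ q + |f' a| ^ q) ^ (1 / q)
            * (gamma2 α lam + gamma1 (1 - α) lam)) ∧
    (1 - α ≤ α * lam ∧ α * lam ≤ 1 - lam * (1 - α) →
      |lam * (α * f a + (1 - α) * f b) + (1 - lam) * f (α * a + (1 - α) * b)
          - (1 / (b - a)) * ∫ x in a..b, f x|
        ≤ (b - a) * (|f' b| ^ q + |f' a| ^ q) ^ (1 / q)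
            * (gamma1 α lam + gamma2 (1 - α) lam)) := by
  have key := main_bound I hI f f' a b ha hb hab hdf hint α lam hα hlam q hq
    ⟨hP.1, hP.2⟩
  obtain ⟨hα0, hα1⟩ := hα
  obtain ⟨hl0, hl1⟩ := hlam
  have hba : (0:ℝ) < b - a := by linarith
  have hne : b - a ≠ 0 := hba.ne'
  have ham1 : a ≤ a + lam*α*(b-a) := by
    nlinarith [mul_nonneg (mul_nonneg hl0 hα0) hba.le]
  have hm2b : a + (1 - lam*(1-α))*(b-a) ≤ b := by
    nlinarith [mul_nonneg (mul_nonneg hl0 (by linarith : (0:ℝ) ≤ 1-α)) hba.le]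
  have hac : a ≤ α*a+(1-α)*b := by nlinarith
  have hcb : α*a+(1-α)*b ≤ b := by nlinarith
  refine ⟨fun ⟨h1, h2⟩ => ?_, fun ⟨h1, h2⟩ => ?_, fun ⟨h1, h2⟩ => ?_⟩
  · -- case 1 : mid / mid
    rw [int_abs_mid _ _ _ ham1
        (by nlinarith [mul_le_mul_of_nonneg_right h1 hba.le]),
      int_abs_mid _ _ _
        (by nlinarith [mul_le_mul_of_nonneg_right h2 hba.le]) hm2b] at key
    refine key.trans (le_of_eq ?_)
    rw [mul_assoc, one_div_mul_eq_div, div_eq_iff hne]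
    simp only [gamma1, gamma2]
    ring
  · -- case 2 : mid / left
    have h3 : α * lam ≤ 1 - α := le_trans h1 h2
    rw [int_abs_mid _ _ _ ham1
        (by nlinarith [mul_le_mul_of_nonneg_right h3 hba.le]),
      int_abs_left _ _ _
        (by nlinarith [mul_le_mul_of_nonneg_right h2 hba.le]) hcb] at key
    refine key.trans (le_of_eq ?_)
    rw [mul_assoc, one_div_mul_eq_div, div_eq_iff hne]
    simp only [gamma1, gamma2]
    ring
  · -- case 3 : right / mid
    have h4 : lam * (1 - α) ≤ α := by
      nlinarith [mul_le_mul_of_nonneg_right hl1 (by linarith : (0:ℝ) ≤ 1-α),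
        mul_le_mul_of_nonneg_left hl1 hα0]
    rw [int_abs_right _ _ _ hac
        (by nlinarith [mul_le_mul_of_nonneg_right h1 hba.le]),
      int_abs_mid _ _ _
        (by nlinarith [mul_le_mul_of_nonneg_right h4 hba.le]) hm2b] at key
    refine key.trans (le_of_eq ?_)
    rw [mul_assoc, one_div_mul_eq_div, div_eq_iff hne]
    simp only [gamma1, gamma2]
    ring
end

section
/- Let f : I ⊆ ℝ → ℝ be differentiable on I° with f' integrable on [a,b], where a, b ∈ I° with a < b, and let α, λ ∈ [0,1]. Suppose |f'| is a P-function on [a,b]. Define I_f(λ,α,a,b) = λ(α f(a) + (1-α) f(b)) + (1-λ) f(α a + (1-α) b) - (1/(b-a)) ∫_a^b f(x) dx, γ₁(α,λ) = (1-α)[αλ - (1-α)/2], and γ₂(α,λ) = (αλ)² - γ₁(α,λ). Then |I_f(λ,α,a,b)| ≤ (b-a)(|f'(b)| + |f'(a)|) · C, where C = γ₂(α,λ) + γ₂(1-α,λ) if αλ ≤ 1-α ≤ 1-λ(1-α); C = γ₂(α,λ) + γ₁(1-α,λ) if αλ ≤ 1-λ(1-α) ≤ 1-α; and C = γ₁(α,λ)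 + γ₂(1-α,λ) if 1-α ≤ αλ ≤ 1-λ(1-α). -/
open MeasureTheory Set Real

lemma integral_linear (u v A : ℝ) :
    ∫ x in u..v, (x - A) = (v - A)^2/2 - (u - A)^2/2 := by
  have h : ∫ x in u..v, (x - A) = (∫ x in u..v, x) - ∫ x in u..v, (A:ℝ) := by
    rw [← intervalIntegral.integral_sub intervalIntegral.intervalIntegrable_id
      intervalIntegrable_const]
  rw [h, integral_id, intervalIntegral.integral_const]; simp [smul_eq_mul]; ring

lemma absInt_cont (A : ℝ) : Continuous (fun x : ℝ => |x - A|) :=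
  (continuous_id.sub continuous_const).abs

lemma abs_int_right (u v A : ℝ) (h1 : A ≤ u) (h2 : u ≤ v) :
    ∫ x in u..v, |x - A| = (v - A)^2/2 - (u - A)^2/2 := by
  rw [intervalIntegral.integral_congr (g := fun x => x - A), integral_linear]
  intro x hx
  rw [Set.uIcc_of_le h2] at hx
  exact abs_of_nonneg (by linarith [hx.1])

lemma abs_int_left (u v A : ℝ) (h1 : u ≤ v) (h2 : v ≤ A) :
    ∫ x in u..v, |x - A| = (A - u)^2/2 - (A - v)^2/2 := by
  rw [intervalIntegral.integral_congr (g := fun x => -(x - A))]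
  · rw [intervalIntegral.integral_neg, integral_linear]; ring
  · intro x hx
    rw [Set.uIcc_of_le h1] at hx
    simp only
    rw [abs_of_nonpos (by linarith [hx.2])]

lemma abs_int_mid (u v A : ℝ) (h1 : u ≤ A) (h2 : A ≤ v) :
    ∫ x in u..v, |x - A| = (A - u)^2/2 + (v - A)^2/2 := by
  rw [← intervalIntegral.integral_add_adjacent_intervals (b := A)
    ((absInt_cont A).intervalIntegrable u A) ((absInt_cont A).intervalIntegrable A v),
    abs_int_left u A A h1 le_rfl, abs_int_right A v A le_rfl h2]
  ring

set_option maxHeartbeats 1600000 in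
theorem stmt_3 (I : Set ℝ) (hI : Convex ℝ I) (f f' : ℝ → ℝ)
    (a b : ℝ) (ha : a ∈ interior I) (hb : b ∈ interior I) (hab : a < b)
    (hdf : ∀ x ∈ interior I, HasDerivAt f (f' x) x)
    (hint : IntervalIntegrable f' MeasureTheory.volume a b)
    (α lam : ℝ) (hα : α ∈ Set.Icc (0:ℝ) 1) (hlam : lam ∈ Set.Icc (0:ℝ) 1)
    (hP : IsPFunctionOn (fun x => |f' x|) (Set.Icc a b)) :
    (α * lam ≤ 1 - α ∧ 1 - α ≤ 1 - lam * (1 - α) →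
      |lam * (α * f a + (1 - α) * f b) + (1 - lam) * f (α * a + (1 - α) * b)
          - (1 / (b - a)) * ∫ x in a..b, f x|
        ≤ (b - a) * (|f' b| + |f' a|)
            * (gamma2 α lam + gamma2 (1 - α) lam)) ∧
    (α * lam ≤ 1 - lam * (1 - α) ∧ 1 - lam * (1 - α) ≤ 1 - α →
      |lam * (α * f a + (1 - α) * f b) + (1 - lam) * f (α * a + (1 - α) * b)
          - (1 / (b - a)) * ∫ x in a..b, f x|
        ≤ (b - a) * (|f' b| + |f' a|)
            * (gamma2 α lam + gamma1 (1 - α) lam)) ∧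
    (1 - α ≤ α * lam ∧ α * lam ≤ 1 - lam * (1 - α) →
      |lam * (α * f a + (1 - α) * f b) + (1 - lam) * f (α * a + (1 - α) * b)
          - (1 / (b - a)) * ∫ x in a..b, f x|
        ≤ (b - a) * (|f' b| + |f' a|)
            * (gamma1 α lam + gamma2 (1 - α) lam)) := by
  obtain ⟨hα0, hα1⟩ := hα
  obtain ⟨hl0, hl1⟩ := hlam
  have hba : (0:ℝ) < b - a := by linarith
  set p : ℝ := α * lam with hp
  set q : ℝ := 1 - lam * (1 - α) with hq
  set c : ℝ := α * a + (1 - α) * b with hc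
  set A : ℝ := a + p * (b - a) with hA
  set B : ℝ := a + q * (b - a) with hB
  have hp0 : 0 ≤ p := mul_nonneg hα0 hl0
  have hp1 : p ≤ 1 := by nlinarith
  have hq0 : 0 ≤ q := by nlinarith
  have hq1 : q ≤ 1 := by nlinarith
  have hac : a ≤ c := by rw [hc]; nlinarith
  have hcb : c ≤ b := by rw [hc]; nlinarith
  have hceq : c = a + (1 - α) * (b - a) := by rw [hc]; ring
  -- membership
  have hIab : Set.Icc a b ⊆ interior I := (hI.interior.ordConnected).out ha hb
  -- continuity of f on Icc a b
  have hfc : ContinuousOn f (Set.Icc a b) := fun x hx =>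
    ((hdf x (hIab hx)).continuousAt).continuousWithinAt
  have hsub1 : Set.uIcc a c ⊆ Set.Icc a b := by
    rw [Set.uIcc_of_le hac]; exact Set.Icc_subset_Icc le_rfl hcb
  have hsub2 : Set.uIcc c b ⊆ Set.Icc a b := by
    rw [Set.uIcc_of_le hcb]; exact Set.Icc_subset_Icc hac le_rfl
  have hint1 : IntervalIntegrable f' volume a c := hint.mono_set (by
    rw [Set.uIcc_of_le hab.le]; exact hsub1)
  have hint2 : IntervalIntegrable f' volume c b := hint.mono_set (by
    rw [Set.uIcc_of_le hab.le]; exact hsub2)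
  have hfint1 : IntervalIntegrable f volume a c :=
    (hfc.mono hsub1).intervalIntegrable
  have hfint2 : IntervalIntegrable f volume c b :=
    (hfc.mono hsub2).intervalIntegrable
  -- integration by parts
  have ibp : ∀ u v A₀ : ℝ, Set.uIcc u v ⊆ Set.Icc a b →
      IntervalIntegrable f' volume u v → IntervalIntegrable f volume u v →
      ∫ x in u..v, (x - A₀) * f' x
        = (v - A₀) * f v - (u - A₀) * f u - ∫ x in u..v, f x := by
    intro u v A₀ hsub hi hfi
    have := intervalIntegral.integral_mul_deriv_eq_deriv_mul
      (u := fun x => x - A₀) (u' := fun _ => (1:ℝ)) (v := f) (v' := f')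
      (a := u) (b := v)
      (fun x _ => (hasDerivAt_id x).sub_const A₀)
      (fun x hx => hdf x (hIab (hsub hx)))
      (intervalIntegrable_const) hi
    rw [this]
    simp [one_mul]
  have ibp1 := ibp a c A hsub1 hint1 hfint1
  have ibp2 := ibp c b B hsub2 hint2 hfint2
  -- the identity
  have hsplit : ∫ x in a..b, f x = (∫ x in a..c, f x) + ∫ x in c..b, f x :=
    (intervalIntegral.integral_add_adjacent_intervals hfint1 hfint2).symm
  have hid : lam * (α * f a + (1 - α) * f b) + (1 - lam) * f (α * a + (1 - α) * b)
      - (1 / (b - a)) * ∫ x in a..b, f x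
      = (1 / (b - a)) * ((∫ x in a..c, (x - A) * f' x) + ∫ x in c..b, (x - B) * f' x) := by
    rw [ibp1, ibp2, hsplit, ← hc]
    have hcA : c - A = (1 - α - p) * (b - a) := by rw [hceq, hA]; ring
    have haA : a - A = -p * (b - a) := by rw [hA]; ring
    have hbB : b - B = (1 - q) * (b - a) := by rw [hB]; ring
    have hcB : c - B = (1 - α - q) * (b - a) := by rw [hceq, hB]; ring
    rw [hcA, haA, hbB, hcB]
    field_simp
    ring
  -- the bound on |f'|
  have M0 : (0:ℝ) ≤ |f' b| + |f' a| := by positivity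
  have hbd : ∀ x ∈ Set.Icc a b, |f' x| ≤ |f' b| + |f' a| := by
    intro x hx
    have ht : (x - a) / (b - a) ∈ Set.Icc (0:ℝ) 1 := by
      constructor
      · apply div_nonneg (by linarith [hx.1]) hba.le
      · rw [div_le_one hba]; linarith [hx.2]
    have := hP.2 b (Set.right_mem_Icc.2 hab.le) a (Set.left_mem_Icc.2 hab.le)
      ((x - a) / (b - a)) ht
    simp only at this
    have hx' : (x - a) / (b - a) * b + (1 - (x - a) / (b - a)) * a = x := by
      field_simp
      ring
    rwa [hx'] at this
  -- bound each piece
  have key : ∀ u v A₀ : ℝ, u ≤ v → Set.uIcc u v ⊆ Set.Icc a b →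
      IntervalIntegrable f' volume u v →
      |∫ x in u..v, (x - A₀) * f' x|
        ≤ (|f' b| + |f' a|) * ∫ x in u..v, |x - A₀| := by
    intro u v A₀ huv hsub hi
    calc |∫ x in u..v, (x - A₀) * f' x|
        ≤ ∫ x in u..v, |x - A₀| * |f' x| := by
          simpa [Real.norm_eq_abs, abs_mul] using
            intervalIntegral.norm_integral_le_integral_norm
              (f := fun x => (x - A₀) * f' x) (μ := volume) huv
      _ ≤ ∫ x in u..v, |x - A₀| * (|f' b| + |f' a|) := by
          apply intervalIntegral.integral_mono_on huv
          · simpa [Real.norm_eq_abs] using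
              hi.norm.continuousOn_mul (absInt_cont A₀).continuousOn
          · exact ((absInt_cont A₀).intervalIntegrable u v).mul_const _
          · intro x hx
            exact mul_le_mul_of_nonneg_left
              (hbd x (hsub (by rwa [Set.uIcc_of_le huv]))) (abs_nonneg _)
      _ = (|f' b| + |f' a|) * ∫ x in u..v, |x - A₀| := by
          rw [intervalIntegral.integral_mul_const]; ring
  have key1 := key a c A hac hsub1 hint1
  have key2 := key c b B hcb hsub2 hint2
  -- combined bound
  have main : |lam * (α * f a + (1 - α) * f b) + (1 - lam) * f (α * a + (1 - α) * b)
      - (1 / (b - a)) * ∫ x in a..b, f x|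
      ≤ (1 / (b - a)) * ((|f' b| + |f' a|) *
          ((∫ x in a..c, |x - A|) + ∫ x in c..b, |x - B|)) := by
    rw [hid, abs_mul, abs_of_pos (by positivity : (0:ℝ) < 1 / (b - a))]
    apply mul_le_mul_of_nonneg_left _ (by positivity)
    calc |(∫ x in a..c, (x - A) * f' x) + ∫ x in c..b, (x - B) * f' x|
        ≤ |∫ x in a..c, (x - A) * f' x| + |∫ x in c..b, (x - B) * f' x| := abs_add_le _ _
      _ ≤ (|f' b| + |f' a|) * (∫ x in a..c, |x - A|)
          + (|f' b| + |f' a|) * ∫ x in c..b, |x - B| := add_le_add key1 key2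
      _ = (|f' b| + |f' a|) * ((∫ x in a..c, |x - A|) + ∫ x in c..b, |x - B|) := by ring
  -- positions of A and B in terms of p, q
  have haA : a ≤ A := by rw [hA]; nlinarith
  have hBb : B ≤ b := by rw [hB]; nlinarith
  refine ⟨?_, ?_, ?_⟩
  · rintro ⟨h1, h2⟩
    -- p ≤ 1 - α, 1 - α ≤ q : A ∈ [a,c], B ∈ [c,b]
    have h2' : 1 - α ≤ q := by rw [hq]; linarith
    have hAc : A ≤ c := by rw [hA, hceq]; nlinarith
    have hcB : c ≤ B := by rw [hB, hceq]; nlinarith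
    have e1 := abs_int_mid a c A haA hAc
    have e2 := abs_int_mid c b B hcB hBb
    refine le_trans main ?_
    rw [e1, e2]
    have : (1 / (b - a)) * ((|f' b| + |f' a|) *
        (((A - a)^2/2 + (c - A)^2/2) + ((B - c)^2/2 + (b - B)^2/2)))
        = (b - a) * (|f' b| + |f' a|) * (gamma2 α lam + gamma2 (1 - α) lam) := by
      rw [hA, hB, hceq, gamma2, gamma2, gamma1, gamma1, hp, hq]
      field_simp
      ring
    rw [this]
  · rintro ⟨h1, h2⟩
    -- p ≤ q ≤ 1 - α : A ∈ [a,c], B ≤ c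
    have h2' : q ≤ 1 - α := by rw [hq]; linarith
    have h1' : p ≤ 1 - α := by rw [hp]; linarith [h1, h2]
    have hAc : A ≤ c := by rw [hA, hceq]; nlinarith
    have hBc : B ≤ c := by rw [hB, hceq]; nlinarith
    have e1 := abs_int_mid a c A haA hAc
    have e2 := abs_int_right c b B hBc hcb
    refine le_trans main ?_
    rw [e1, e2]
    have : (1 / (b - a)) * ((|f' b| + |f' a|) *
        (((A - a)^2/2 + (c - A)^2/2) + ((b - B)^2/2 - (c - B)^2/2)))
        = (b - a) * (|f' b| + |f' a|) * (gamma2 α lam + gamma1 (1 - α) lam) := by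
      rw [hA, hB, hceq, gamma2, gamma1, gamma1, hp, hq]
      field_simp
      ring
    rw [this]
  · rintro ⟨h1, h2⟩
    -- 1 - α ≤ p ≤ q : c ≤ A, c ≤ B
    have h2' : p ≤ q := by rw [hp, hq]; linarith
    have hcA : c ≤ A := by rw [hA, hceq]; nlinarith
    have hcB : c ≤ B := by rw [hB, hceq]; nlinarith
    have e1 := abs_int_left a c A hac hcA
    have e2 := abs_int_mid c b B hcB hBb
    refine le_trans main ?_
    rw [e1, e2]
    have : (1 / (b - a)) * ((|f' b| + |f' a|) *
        (((A - a)^2/2 - (A - c)^2/2) + ((B - c)^2/2 + (b - B)^2/2)))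
        = (b - a) * (|f' b| + |f' a|) * (gamma1 α lam + gamma2 (1 - α) lam) := by
      rw [hA, hB, hceq, gamma1, gamma2, gamma1, hp, hq]
      field_simp
      ring
    rw [this]
end

section
/- Let f : I ⊆ ℝ → ℝ be differentiable on I° with f' integrable on [a,b], where a, b ∈ I° with a < b, and let q ≥ 1. Suppose |f'|^q is a P-function on [a,b]. Then the following Simpson type inequality holds: |(1/6)[f(a) + 4 f((a+b)/2) + f(b)] - (1/(b-a)) ∫_a^b f(x) dx| ≤ (5(b-a)/36)(|f'(b)|^q + |f'(a)|^q)^{1/q}. -/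
open MeasureTheory Set Real
open intervalIntegral

theorem abs_kernel_integral (p c r : ℝ) (hpc : p ≤ c) (hcr : c ≤ r) :
    ∫ x in p..r, |x - c| = ((c-p)^2 + (r-c)^2)/2 := by
  have h1 : ∫ x in p..c, |x - c| = (c-p)^2/2 := by
    rw [integral_congr (g := fun x => c - x)]
    · rw [integral_sub intervalIntegrable_const intervalIntegrable_id]
      simp [integral_id]
      ring
    · intro x hx
      rw [Set.uIcc_of_le hpc] at hx
      show |x - c| = c - x
      rw [abs_of_nonpos (by linarith [hx.2])]
      ring
  have h2 : ∫ x in c..r, |x - c| = (r-c)^2/2 := by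
    rw [integral_congr (g := fun x => x - c)]
    · rw [integral_sub intervalIntegrable_id intervalIntegrable_const]
      simp [integral_id]
      ring
    · intro x hx
      rw [Set.uIcc_of_le hcr] at hx
      show |x - c| = x - c
      rw [abs_of_nonneg (by linarith [hx.1])]
  rw [← integral_add_adjacent_intervals (b := c), h1, h2]
  · ring
  · exact (continuous_abs.comp (by continuity)).intervalIntegrable _ _
  · exact (continuous_abs.comp (by continuity)).intervalIntegrable _ _

theorem kernel_bound (p c r C : ℝ) (hpc : p ≤ c) (hcr : c ≤ r)
    (g : ℝ → ℝ) (hg : IntervalIntegrable g volume p r)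
    (hbd : ∀ x ∈ Set.Icc p r, |g x| ≤ C) :
    |∫ x in p..r, (x - c) * g x| ≤ C * ((c-p)^2 + (r-c)^2)/2 := by
  have hpr : p ≤ r := hpc.trans hcr
  have h1 : |∫ x in p..r, (x - c) * g x| ≤ ∫ x in p..r, |x - c| * |g x| := by
    simpa [abs_mul] using intervalIntegral.norm_integral_le_integral_norm (f := fun x => (x - c) * g x) hpr
  have habs : IntervalIntegrable (fun x => |x - c|) volume p r :=
    (continuous_abs.comp (by continuity)).intervalIntegrable _ _
  have h2 : ∫ x in p..r, |x - c| * |g x| ≤ ∫ x in p..r, |x - c| * C := by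
    apply intervalIntegral.integral_mono_on hpr
    · have := hg.norm.continuousOn_mul (g := fun x => |x - c|)
        ((continuous_abs.comp (by continuity : Continuous fun x : ℝ => x - c)).continuousOn)
      simpa using this
    · exact habs.mul_const C
    · intro x hx
      exact mul_le_mul_of_nonneg_left (hbd x hx) (abs_nonneg _)
  have h3 : ∫ x in p..r, |x - c| * C = C * ((c-p)^2 + (r-c)^2)/2 := by
    rw [intervalIntegral.integral_mul_const, abs_kernel_integral p c r hpc hcr]
    ring
  linarith


theorem stmt_4 (I : Set ℝ) (hI : Convex ℝ I) (f f' : ℝ → ℝ)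
    (a b : ℝ) (ha : a ∈ interior I) (hb : b ∈ interior I) (hab : a < b)
    (hdf : ∀ x ∈ interior I, HasDerivAt f (f' x) x)
    (hint : IntervalIntegrable f' MeasureTheory.volume a b)
    (q : ℝ) (hq : 1 ≤ q)
    (hP : IsPFunctionOn (fun x => |f' x| ^ q) (Set.Icc a b)) :
    |(1 / 6) * (f a + 4 * f ((a + b) / 2) + f b) - (1 / (b - a)) * ∫ x in a..b, f x|
      ≤ (5 * (b - a) / 36) * (|f' b| ^ q + |f' a| ^ q) ^ (1 / q) := by
  have hba : (0:ℝ) < b - a := by linarith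
  set m : ℝ := (a + b) / 2 with hm
  set c1 : ℝ := (5 * a + b) / 6 with hc1
  set c2 : ℝ := (a + 5 * b) / 6 with hc2
  set C : ℝ := (|f' b| ^ q + |f' a| ^ q) ^ (1 / q) with hCdef
  have hsub : Set.Icc a b ⊆ interior I := (hI.interior.ordConnected).out ha hb
  have hq0 : q ≠ 0 := by positivity
  -- uniform bound on |f'|
  have hbd : ∀ x ∈ Set.Icc a b, |f' x| ≤ C := by
    intro x hx
    have ht : (b - x) / (b - a) ∈ Set.Icc (0:ℝ) 1 := by
      constructor
      · exact div_nonneg (by linarith [hx.2]) hba.le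
      · rw [div_le_one hba]; linarith [hx.1]
    have hpt : (b - x) / (b - a) * a + (1 - (b - x) / (b - a)) * b = x := by
      field_simp
      ring
    have key := hP.2 a ⟨le_refl a, hab.le⟩ b ⟨hab.le, le_refl b⟩ _ ht
    rw [hpt] at key
    have h1 : |f' x| = (|f' x| ^ q) ^ (1 / q) := by
      rw [← Real.rpow_mul (abs_nonneg _), mul_one_div_cancel hq0, Real.rpow_one]
    rw [h1, hCdef]
    have : |f' a| ^ q + |f' b| ^ q = |f' b| ^ q + |f' a| ^ q := by ring
    rw [this] at key
    exact Real.rpow_le_rpow (by positivity) key (by positivity)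
  have hC0 : 0 ≤ C := by positivity
  have ham : a ≤ m := by rw [hm]; linarith
  have hmb : m ≤ b := by rw [hm]; linarith
  have hac1 : a ≤ c1 := by rw [hc1]; linarith
  have hc1m : c1 ≤ m := by rw [hc1, hm]; linarith
  have hmc2 : m ≤ c2 := by rw [hc2, hm]; linarith
  have hc2b : c2 ≤ b := by rw [hc2]; linarith
  -- integrability
  have hint1 : IntervalIntegrable f' volume a m := hint.mono_set (by
    rw [Set.uIcc_of_le ham, Set.uIcc_of_le hab.le]; exact Set.Icc_subset_Icc le_rfl hmb)
  have hint2 : IntervalIntegrable f' volume m b := hint.mono_set (by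
    rw [Set.uIcc_of_le hmb, Set.uIcc_of_le hab.le]; exact Set.Icc_subset_Icc ham le_rfl)
  have hfc : ContinuousOn f (Set.Icc a b) := fun x hx =>
    (hdf x (hsub hx)).continuousAt.continuousWithinAt
  have hfint1 : IntervalIntegrable f volume a m := by
    apply ContinuousOn.intervalIntegrable
    rw [Set.uIcc_of_le ham]
    exact hfc.mono (Set.Icc_subset_Icc le_rfl hmb)
  have hfint2 : IntervalIntegrable f volume m b := by
    apply ContinuousOn.intervalIntegrable
    rw [Set.uIcc_of_le hmb]
    exact hfc.mono (Set.Icc_subset_Icc ham le_rfl)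
  -- integration by parts on both halves
  have e1 : ∫ x in a..m, (x - c1) * f' x
      = (m - c1) * f m - (a - c1) * f a - ∫ x in a..m, 1 * f x := by
    apply intervalIntegral.integral_mul_deriv_eq_deriv_mul
    · intro x _
      simpa using ((hasDerivAt_id x).sub_const c1)
    · intro x hx
      apply hdf
      apply hsub
      rw [Set.uIcc_of_le ham] at hx
      exact Set.Icc_subset_Icc le_rfl hmb hx
    · exact intervalIntegrable_const
    · exact hint1
  have e2 : ∫ x in m..b, (x - c2) * f' x
      = (b - c2) * f b - (m - c2) * f m - ∫ x in m..b, 1 * f x := by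
    apply intervalIntegral.integral_mul_deriv_eq_deriv_mul
    · intro x _
      simpa using ((hasDerivAt_id x).sub_const c2)
    · intro x hx
      apply hdf
      apply hsub
      rw [Set.uIcc_of_le hmb] at hx
      exact Set.Icc_subset_Icc ham le_rfl hx
    · exact intervalIntegrable_const
    · exact hint2
  simp only [one_mul] at e1 e2
  have hsplit : ∫ x in a..b, f x = (∫ x in a..m, f x) + ∫ x in m..b, f x :=
    (integral_add_adjacent_intervals hfint1 hfint2).symm
  set A1 : ℝ := ∫ x in a..m, (x - c1) * f' x with hA1
  set A2 : ℝ := ∫ x in m..b, (x - c2) * f' x with hA2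
  have key : (1 / 6) * (f a + 4 * f m + f b) - (1 / (b - a)) * ∫ x in a..b, f x
      = (A1 + A2) / (b - a) := by
    rw [hsplit, e1, e2]
    field_simp
    ring
  -- bounds on A1, A2
  have b1 : |A1| ≤ C * ((c1 - a)^2 + (m - c1)^2) / 2 :=
    kernel_bound a c1 m C hac1 hc1m f' hint1
      (fun x hx => hbd x (Set.Icc_subset_Icc le_rfl hmb hx))
  have b2 : |A2| ≤ C * ((c2 - m)^2 + (b - c2)^2) / 2 :=
    kernel_bound m c2 b C hmc2 hc2b f' hint2
      (fun x hx => hbd x (Set.Icc_subset_Icc ham le_rfl hx))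
  rw [key, abs_div, abs_of_pos hba, div_le_iff₀ hba]
  calc |A1 + A2| ≤ |A1| + |A2| := abs_add_le _ _
    _ ≤ C * ((c1 - a)^2 + (m - c1)^2) / 2 + C * ((c2 - m)^2 + (b - c2)^2) / 2 := by
        linarith
    _ ≤ 5 * (b - a) / 36 * C * (b - a) := by
        rw [hc1, hc2, hm]
        nlinarith [sq_nonneg (b - a), hC0]
end

section
/- Let f : I ⊆ ℝ → ℝ be differentiable on I° with f' integrable on [a,b], where a, b ∈ I° with a < b, and let q ≥ 1. Suppose |f'|^q is a P-function on [a,b]. Then the following midpoint inequality holds: |f((a+b)/2) - (1/(b-a)) ∫_a^b f(x) dx| ≤ ((b-a)/4)(|f'(b)|^q + |f'(a)|^q)^{1/q}. -/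
/-!
Every point of `[a, b]` lies on the segment from `b` to `a`, so the `P`-function property bounds
`|f'|` on `[a, b]` by `M = (|f' b| ^ q + |f' a| ^ q) ^ (1 / q)`. Hence `f` is `M`-Lipschitz there, and
`|f(c) - ⨍ f| ≤ ⨍ |f c - f x| ≤ M ⨍ |c - x| = M (b - a) / 4` at the midpoint `c`.
-/

open MeasureTheory Set Real

theorem IsPFunctionOn.le_add {g : ℝ → ℝ} {s : Set ℝ} (hg : IsPFunctionOn g s) {x y z : ℝ}
    (hx : x ∈ s) (hy : y ∈ s) (hz : z ∈ segment ℝ x y) : g z ≤ g x + g y := by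
  obtain ⟨t, u, ht, hu, htu, rfl⟩ := hz
  obtain rfl : u = 1 - t := by linarith
  exact hg.2 x hx y hy t ⟨ht, by linarith⟩

theorem integral_abs_of_nonpos_of_nonneg {u v : ℝ} (hu : u ≤ 0) (hv : 0 ≤ v) :
    ∫ x in u..v, |x| = (u ^ 2 + v ^ 2) / 2 := by
  have hneg : ∫ x in u..0, |x| = ∫ x in u..0, -x :=
    intervalIntegral.integral_congr fun x hx => by
      rw [uIcc_of_le hu] at hx
      exact abs_of_nonpos hx.2
  have hpos : ∫ x in (0:ℝ)..v, |x| = ∫ x in (0:ℝ)..v, x :=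
    intervalIntegral.integral_congr fun x hx => by
      rw [uIcc_of_le hv] at hx
      exact abs_of_nonneg hx.1
  rw [← intervalIntegral.integral_add_adjacent_intervals (b := 0)
      (continuous_abs.intervalIntegrable _ _) (continuous_abs.intervalIntegrable _ _),
    hneg, hpos, intervalIntegral.integral_neg, integral_id, integral_id]
  ring

theorem integral_abs_sub_of_mem_Icc {a b c : ℝ} (hc : c ∈ Icc a b) :
    ∫ x in a..b, |c - x| = ((c - a) ^ 2 + (b - c) ^ 2) / 2 := by
  rw [intervalIntegral.integral_comp_sub_left (fun x => |x|),
    integral_abs_of_nonpos_of_nonneg (by linarith [hc.2]) (by linarith [hc.1])]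
  ring

theorem abs_sub_midpoint_average_le {f f' : ℝ → ℝ} {a b M : ℝ} (hab : a < b)
    (hf : ∀ x ∈ Icc a b, HasDerivWithinAt f (f' x) (Icc a b) x)
    (hM : ∀ x ∈ Icc a b, |f' x| ≤ M) :
    |f ((a + b) / 2) - (1 / (b - a)) * ∫ x in a..b, f x| ≤ ((b - a) / 4) * M := by
  set c := (a + b) / 2 with hc_def
  have hba : 0 < b - a := by linarith
  have hc : c ∈ Icc a b := ⟨by linarith, by linarith⟩
  have hfc : ContinuousOn f (Icc a b) := fun x hx => (hf x hx).continuousWithinAt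
  have hfint : IntervalIntegrable f volume a b :=
    hfc.intervalIntegrable_of_Icc hab.le
  have hlip : ∀ x ∈ Icc a b, |f c - f x| ≤ M * |c - x| := fun x hx =>
    (convex_Icc a b).norm_image_sub_le_of_norm_hasDerivWithin_le hf hM hx hc
  have hsplit : f c - (1 / (b - a)) * ∫ x in a..b, f x
      = (1 / (b - a)) * ∫ x in a..b, (f c - f x) := by
    rw [intervalIntegral.integral_sub intervalIntegrable_const hfint,
      intervalIntegral.integral_const, smul_eq_mul]
    field_simp
  have hintegral : |∫ x in a..b, (f c - f x)| ≤ M * ((b - a) ^ 2 / 4) :=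
    calc |∫ x in a..b, (f c - f x)| ≤ ∫ x in a..b, |f c - f x| :=
          intervalIntegral.abs_integral_le_integral_abs hab.le
      _ ≤ ∫ x in a..b, M * |c - x| :=
          intervalIntegral.integral_mono_on hab.le
            ((continuousOn_const.sub hfc).abs.intervalIntegrable_of_Icc hab.le)
            ((continuous_const.mul (continuous_const.sub continuous_id).abs).intervalIntegrable _ _)
            hlip
      _ = M * ((b - a) ^ 2 / 4) := by
          rw [intervalIntegral.integral_const_mul, integral_abs_sub_of_mem_Icc hc]
          ring
  calc |f c - (1 / (b - a)) * ∫ x in a..b, f x|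
      = (1 / (b - a)) * |∫ x in a..b, (f c - f x)| := by
        rw [hsplit, abs_mul, abs_of_pos (one_div_pos.mpr hba)]
    _ ≤ (1 / (b - a)) * (M * ((b - a) ^ 2 / 4)) := by gcongr
    _ = ((b - a) / 4) * M := by field_simp

theorem stmt_5_general (I : Set ℝ) (hI : Convex ℝ I) (f f' : ℝ → ℝ)
    (a b : ℝ) (ha : a ∈ interior I) (hb : b ∈ interior I) (hab : a < b)
    (hdf : ∀ x ∈ interior I, HasDerivAt f (f' x) x)
    (q : ℝ) (hq : 1 ≤ q)
    (hP : IsPFunctionOn (fun x => |f' x| ^ q) (Set.Icc a b)) :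
    |f ((a + b) / 2) - (1 / (b - a)) * ∫ x in a..b, f x|
      ≤ ((b - a) / 4) * (|f' b| ^ q + |f' a| ^ q) ^ (1 / q) := by
  have hIcc : Icc a b ⊆ interior I := by
    rw [← segment_eq_Icc hab.le]
    exact hI.interior.segment_subset ha hb
  refine abs_sub_midpoint_average_le hab (fun x hx => (hdf x (hIcc hx)).hasDerivWithinAt)
    fun x hx => ?_
  have hbx : |f' x| ^ q ≤ |f' b| ^ q + |f' a| ^ q := by
    refine hP.le_add (right_mem_Icc.mpr hab.le) (left_mem_Icc.mpr hab.le) ?_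
    rwa [segment_symm, segment_eq_Icc hab.le]
  rw [one_div]
  exact (le_rpow_inv_iff_of_pos (abs_nonneg _) (by positivity) (by linarith)).mpr hbx

theorem stmt_5 (I : Set ℝ) (hI : Convex ℝ I) (f f' : ℝ → ℝ)
    (a b : ℝ) (ha : a ∈ interior I) (hb : b ∈ interior I) (hab : a < b)
    (hdf : ∀ x ∈ interior I, HasDerivAt f (f' x) x)
    (hint : IntervalIntegrable f' MeasureTheory.volume a b)
    (q : ℝ) (hq : 1 ≤ q)
    (hP : IsPFunctionOn (fun x => |f' x| ^ q) (Set.Icc a b)) :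
    |f ((a + b) / 2) - (1 / (b - a)) * ∫ x in a..b, f x|
      ≤ ((b - a) / 4) * (|f' b| ^ q + |f' a| ^ q) ^ (1 / q) :=
  stmt_5_general I hI f f' a b ha hb hab hdf q hq hP
end

section
/- Let f : I ⊆ ℝ → ℝ be differentiable on I° with f' integrable on [a,b], where a, b ∈ I° with a < b, and let q ≥ 1. Suppose |f'|^q is a P-function on [a,b]. Then the following trapezoid inequality holds: |(f(a) + f(b))/2 - (1/(b-a)) ∫_a^b f(x) dx| ≤ ((b-a)/4)(|f'(b)|^q + |f'(a)|^q)^{1/q}. -/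
open MeasureTheory Set Real

open intervalIntegral in
lemma abs_mid_integral (a b : ℝ) (hab : a ≤ b) :
    ∫ x in a..b, |x - (a+b)/2| = (b-a)^2/4 := by
  set m := (a+b)/2 with hm
  have hm1 : a ≤ m := by rw [hm]; linarith
  have hm2 : m ≤ b := by rw [hm]; linarith
  have hcont : ∀ c d : ℝ, IntervalIntegrable (fun x => |x - m|) volume c d := fun c d =>
    ((continuous_id.sub continuous_const).abs).intervalIntegrable c d
  rw [← intervalIntegral.integral_add_adjacent_intervals (hcont a m) (hcont m b)]
  have h1 : ∫ x in a..m, |x - m| = ∫ x in a..m, (m - x) := by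
    apply intervalIntegral.integral_congr
    intro x hx
    rw [uIcc_of_le hm1] at hx
    dsimp only
    rw [abs_of_nonpos (by linarith [hx.2])]
    ring
  have h2 : ∫ x in m..b, |x - m| = ∫ x in m..b, (x - m) := by
    apply intervalIntegral.integral_congr
    intro x hx
    rw [uIcc_of_le hm2] at hx
    dsimp only
    rw [abs_of_nonneg (by linarith [hx.1])]
  rw [h1, h2]
  rw [intervalIntegral.integral_sub (intervalIntegrable_const) (intervalIntegral.intervalIntegrable_id),
      intervalIntegral.integral_sub (intervalIntegral.intervalIntegrable_id) (intervalIntegrable_const)]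
  have hid : ∀ c d : ℝ, ∫ x in c..d, x = (d^2 - c^2)/2 := fun c d => integral_id
  have hc : ∀ c d e : ℝ, ∫ _ in c..d, e = (d - c) * e := fun c d e => by simp
  rw [hid, hid, hc, hc]
  simp only [smul_eq_mul, hm]
  ring

theorem stmt_6 (I : Set ℝ) (hI : Convex ℝ I) (f f' : ℝ → ℝ)
    (a b : ℝ) (ha : a ∈ interior I) (hb : b ∈ interior I) (hab : a < b)
    (hdf : ∀ x ∈ interior I, HasDerivAt f (f' x) x)
    (hint : IntervalIntegrable f' MeasureTheory.volume a b)
    (q : ℝ) (hq : 1 ≤ q)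
    (hP : IsPFunctionOn (fun x => |f' x| ^ q) (Set.Icc a b)) :
    |(f a + f b) / 2 - (1 / (b - a)) * ∫ x in a..b, f x|
      ≤ ((b - a) / 4) * (|f' b| ^ q + |f' a| ^ q) ^ (1 / q) := by
  have hq0 : 0 < q := lt_of_lt_of_le one_pos hq
  have hba : 0 < b - a := sub_pos.mpr hab
  set m : ℝ := (a + b) / 2 with hm
  set M : ℝ := (|f' b| ^ q + |f' a| ^ q) ^ (1 / q) with hM
  have hIab : Icc a b ⊆ interior I := hI.interior.ordConnected.out ha hb
  -- pointwise bound
  have hbd : ∀ x ∈ Icc a b, |f' x| ≤ M := by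
    intro x hx
    have ht : (x - a) / (b - a) ∈ Icc (0:ℝ) 1 := by
      constructor
      · exact div_nonneg (by linarith [hx.1]) hba.le
      · rw [div_le_one hba]; linarith [hx.2]
    have hxx : ((x - a) / (b - a)) * b + (1 - (x - a) / (b - a)) * a = x := by
      field_simp
      ring
    have h1 := hP.2 b (right_mem_Icc.mpr hab.le) a (left_mem_Icc.mpr hab.le) _ ht
    rw [hxx] at h1
    have h2 : |f' x| = (|f' x| ^ q) ^ (1 / q) := by
      rw [← Real.rpow_mul (abs_nonneg _), mul_one_div_cancel hq0.ne', Real.rpow_one]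
    rw [h2, hM]
    exact Real.rpow_le_rpow (Real.rpow_nonneg (abs_nonneg _) _) h1 (by positivity)
  have hM0 : 0 ≤ M := by rw [hM]; positivity
  have hibp := intervalIntegral.integral_mul_deriv_eq_deriv_mul
      (u := fun x => x - m) (v := f) (u' := fun _ => (1:ℝ)) (v' := f')
      (fun x _ => (hasDerivAt_id x).sub_const m)
      (fun x hx => hdf x (hIab ((uIcc_of_le hab.le) ▸ hx)))
      intervalIntegrable_const hint
  simp only [one_mul] at hibp
  have key : (f a + f b) / 2 - (1 / (b - a)) * ∫ x in a..b, f x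
      = (1/(b-a)) * ∫ x in a..b, (x - m) * f' x := by
    rw [hibp, hm]
    field_simp
    ring
  rw [key, abs_mul, abs_of_nonneg (by positivity : (0:ℝ) ≤ 1/(b-a))]
  have hintg : IntervalIntegrable (fun x => (x - m) * f' x) volume a b :=
    hint.continuousOn_mul ((continuous_id.sub continuous_const).continuousOn)
  have h3 : |∫ x in a..b, (x - m) * f' x| ≤ ∫ x in a..b, |(x - m) * f' x| :=
    intervalIntegral.abs_integral_le_integral_abs hab.le
  have h4 : ∫ x in a..b, |(x - m) * f' x| ≤ ∫ x in a..b, |x - m| * M := by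
    apply intervalIntegral.integral_mono_on hab.le hintg.abs
      (((continuous_id.sub continuous_const).abs.mul continuous_const).intervalIntegrable a b)
    intro x hx
    rw [abs_mul]
    exact mul_le_mul_of_nonneg_left (hbd x hx) (abs_nonneg _)
  have h5 : ∫ x in a..b, |x - m| * M = (b-a)^2/4 * M := by
    rw [intervalIntegral.integral_mul_const, hm, abs_mid_integral a b hab.le]
  calc (1/(b-a)) * |∫ x in a..b, (x - m) * f' x|
      ≤ (1/(b-a)) * ((b-a)^2/4 * M) := by
        apply mul_le_mul_of_nonneg_left _ (by positivity)
        exact le_trans h3 (h4.trans_eq h5)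
    _ = (b-a)/4 * M := by field_simp
end

section
/- Let f : I ⊆ ℝ → ℝ be differentiable on I° with f' integrable on [a,b], where a, b ∈ I° with a < b, let α, λ ∈ [0,1], and let q > 1 with 1/p + 1/q = 1. Suppose |f'|^q is a P-function on [a,b]. Define I_f(λ,α,a,b) = λ(α f(a) + (1-α) f(b)) + (1-λ) f(α a + (1-α) b) - (1/(b-a)) ∫_a^b f(x) dx, c_f(α,q) = (1-α)[|f'((1-α) b + α a)|^q + |f'(a)|^q], k_f(α,q) = α[|f'((1-α) b + α a)|^q + |f'(b)|^q], ε₁(α,λ,p) = (αλ)^{p+1} + (1-α-αλ)^{p+1}, and ε₂(α,λ,p) = (αλ)^{p+1} - (αλ-1+α)^{p+1}. Then |I_f(λ,α,a,b)| ≤ (b-a)(1/(p+1))^{1/p} · D, where D = ε₁^{1/p}(α,λ,p) c_f^{1/q}(α,q) + ε₁^{1/p}(1-α,λ,p) k_f^{1/q}(α,q) if αλ ≤ 1-α ≤ 1-λ(1-α); D = ε₁^{1/p}(α,λ,p) c_f^{1/q}(α,q) + ε₂^{1/p}(1-α,λ,p) k_f^{1/q}(α,q) if αλ ≤ 1-λ(1-α)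 ≤ 1-α; and D = ε₂^{1/p}(α,λ,p) c_f^{1/q}(α,q) + ε₁^{1/p}(1-α,λ,p) k_f^{1/q}(α,q) if 1-α ≤ αλ ≤ 1-λ(1-α). -/
open MeasureTheory Set Real

/-- `ε₁(α,λ,p) = (αλ)^{p+1} + (1-α-αλ)^{p+1}`. -/
noncomputable def eps1 (α lam p : ℝ) : ℝ :=
  (α * lam) ^ (p + 1) + (1 - α - α * lam) ^ (p + 1)

/-- `ε₂(α,λ,p) = (αλ)^{p+1} - (αλ-1+α)^{p+1}`. -/
noncomputable def eps2 (α lam p : ℝ) : ℝ :=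
  (α * lam) ^ (p + 1) - (α * lam - 1 + α) ^ (p + 1)

/-!
Substituting `x = a + (b - a) t` and integrating by parts against the piecewise linear kernel
equal to `t - αλ` on `[0, 1 - α]` and to `t - (1 - λ(1 - α))` on `[1 - α, 1]` turns the left-hand
side into `(b - a)` times the sum of the two integrals `∫ kernel · f'(a + (b - a) t) dt`. Hölder's
inequality bounds each of them by `(∫ |kernel|^p)^(1/p) (∫ |f'|^q)^(1/q)`. The kernel integrals are
`ε₁/(p+1)` or `ε₂/(p+1)` according to whether the kernel changes sign on its subinterval (this is
what the three cases distinguish), and the P-function property bounds `|f'|^q` on a subinterval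
by the sum of its endpoint values, so that `∫ |f'|^q` is at most the length of the subinterval
times that sum.
-/

open intervalIntegral

section KernelIntegrals

variable {s u v p : ℝ}

theorem integral_abs_sub_rpow_of_le_left (hp : 0 ≤ p) (hsu : s ≤ u) (huv : u ≤ v) :
    ∫ t in u..v, |t - s| ^ p = ((v - s) ^ (p + 1) - (u - s) ^ (p + 1)) / (p + 1) := by
  have habs : ∫ t in u..v, |t - s| ^ p = ∫ t in u..v, (t - s) ^ p :=
    integral_congr fun t ht => by
      rw [uIcc_of_le huv] at ht
      simp only [abs_of_nonneg (sub_nonneg.2 (hsu.trans ht.1))]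
  rw [habs, integral_comp_sub_right (· ^ p), integral_rpow (Or.inl (by linarith))]

theorem integral_abs_sub_rpow_of_right_le (hp : 0 ≤ p) (hvs : v ≤ s) (huv : u ≤ v) :
    ∫ t in u..v, |t - s| ^ p = ((s - u) ^ (p + 1) - (s - v) ^ (p + 1)) / (p + 1) := by
  have habs : ∫ t in u..v, |t - s| ^ p = ∫ t in u..v, (s - t) ^ p :=
    integral_congr fun t ht => by
      rw [uIcc_of_le huv] at ht
      simp only [abs_sub_comm t s, abs_of_nonneg (sub_nonneg.2 (ht.2.trans hvs))]
  rw [habs, integral_comp_sub_left (· ^ p), integral_rpow (Or.inl (by linarith))]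

theorem integral_abs_sub_rpow_of_mem_Icc (hp : 0 ≤ p) (hus : u ≤ s) (hsv : s ≤ v) :
    ∫ t in u..v, |t - s| ^ p = ((s - u) ^ (p + 1) + (v - s) ^ (p + 1)) / (p + 1) := by
  have hcont : Continuous fun t : ℝ => |t - s| ^ p :=
    (continuous_abs.comp (continuous_sub_right s)).rpow_const fun _ => Or.inr hp
  rw [← integral_add_adjacent_intervals (hcont.intervalIntegrable u s)
      (hcont.intervalIntegrable s v), integral_abs_sub_rpow_of_right_le hp le_rfl hus,
    integral_abs_sub_rpow_of_le_left hp le_rfl hsv, sub_self, zero_rpow (by linarith)]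
  ring

end KernelIntegrals

theorem div_rpow_eq_one_div_rpow_mul {x y : ℝ} (z : ℝ) (hy : 0 < y) (hxy : 0 ≤ x / y) :
    (x / y) ^ z = (1 / y) ^ z * x ^ z := by
  have hx : 0 ≤ x := by simpa [div_mul_cancel₀ x hy.ne'] using mul_nonneg hxy hy.le
  rw [← one_div_mul_eq_div, mul_rpow (by positivity) hx]

section UnitInterval

variable {α lam p : ℝ}

theorem integral_abs_sub_rpow_eq_eps1 (hp : 0 ≤ p) (h₀ : 0 ≤ α * lam) (h : α * lam ≤ 1 - α) :
    ∫ t in 0..1 - α, |t - α * lam| ^ p = eps1 α lam p / (p + 1) := by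
  rw [integral_abs_sub_rpow_of_mem_Icc hp h₀ h, eps1, sub_zero, sub_sub]

theorem integral_abs_sub_rpow_eq_eps2 (hp : 0 ≤ p) (hα : α ≤ 1) (h : 1 - α ≤ α * lam) :
    ∫ t in 0..1 - α, |t - α * lam| ^ p = eps2 α lam p / (p + 1) := by
  rw [integral_abs_sub_rpow_of_right_le hp h (by linarith), eps2, sub_zero]
  ring_nf

theorem integral_abs_sub_rpow_reflect (α lam p : ℝ) :
    ∫ t in α..1, |t - (1 - lam * α)| ^ p = ∫ t in 0..1 - α, |t - α * lam| ^ p := by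
  have := integral_comp_sub_left (a := α) (b := 1) (fun t => |t - α * lam| ^ p) 1
  rw [sub_self] at this
  rw [← this]
  refine integral_congr fun t _ => ?_
  rw [← abs_neg]
  ring_nf

end UnitInterval

namespace IsPFunctionOn

variable {g : ℝ → ℝ} {s : Set ℝ}

theorem mono (hg : IsPFunctionOn g s) {s' : Set ℝ} (hs : s' ⊆ s) : IsPFunctionOn g s' :=
  ⟨fun x hx => hg.1 x (hs hx), fun x hx y hy => hg.2 x (hs hx) y (hs hy)⟩

theorem le_add_of_mem_uIcc (hg : IsPFunctionOn g s) {x y z : ℝ} (hx : x ∈ s) (hy : y ∈ s)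
    (hz : z ∈ uIcc x y) : g z ≤ g x + g y := by
  rw [← segment_eq_uIcc] at hz
  obtain ⟨θ, η, hθ, hη, hθη, rfl⟩ := hz
  obtain rfl : η = 1 - θ := by linarith
  exact hg.2 x hx y hy θ ⟨hθ, by linarith⟩

theorem comp_affine (hg : IsPFunctionOn g s) {c d : ℝ} {s' : Set ℝ}
    (hmaps : MapsTo (fun t => c + d * t) s' s) : IsPFunctionOn (fun t => g (c + d * t)) s' := by
  refine ⟨fun x hx => hg.1 _ (hmaps hx), fun x hx y hy θ hθ => ?_⟩
  have hcomb : c + d * (θ * x + (1 - θ) * y) = θ * (c + d * x) + (1 - θ) * (c + d * y) := by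
    ring
  simpa only [hcomb] using hg.2 _ (hmaps hx) _ (hmaps hy) θ hθ

theorem integrableOn_Ioc {u v : ℝ} (hg : IsPFunctionOn g (Icc u v))
    (hm : AEStronglyMeasurable g (volume.restrict (Ioc u v))) : IntegrableOn g (Ioc u v) := by
  refine Integrable.mono' (integrableOn_const (C := g u + g v) measure_Ioc_lt_top.ne) hm
    ((ae_restrict_iff' measurableSet_Ioc).2 (ae_of_all _ fun t ht => ?_))
  have huv : u ≤ v := ht.1.le.trans ht.2
  rw [norm_of_nonneg (hg.1 t (Ioc_subset_Icc_self ht))]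
  exact hg.le_add_of_mem_uIcc (left_mem_Icc.2 huv) (right_mem_Icc.2 huv)
    (uIcc_of_le huv ▸ Ioc_subset_Icc_self ht)

theorem integral_le {u v : ℝ} (hg : IsPFunctionOn g s) (hu : u ∈ s) (hv : v ∈ s) (huv : u ≤ v)
    (hint : IntervalIntegrable g volume u v) : ∫ t in u..v, g t ≤ (v - u) * (g u + g v) := by
  calc ∫ t in u..v, g t ≤ ∫ _ in u..v, (g u + g v) :=
        integral_mono_on huv hint intervalIntegrable_const fun t ht =>
          hg.le_add_of_mem_uIcc hu hv (uIcc_of_le huv ▸ ht)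
    _ = (v - u) * (g u + g v) := by rw [intervalIntegral.integral_const, smul_eq_mul]

theorem memLp_of_abs_rpow {h : ℝ → ℝ} {u v q : ℝ} (hq : 0 < q)
    (hP : IsPFunctionOn (fun t => |h t| ^ q) (Icc u v))
    (hh : AEStronglyMeasurable h (volume.restrict (Ioc u v))) :
    MemLp h (ENNReal.ofReal q) (volume.restrict (Ioc u v)) := by
  refine (integrable_norm_rpow_iff hh (by simp [hq]) ENNReal.ofReal_ne_top).1 ?_
  simp only [ENNReal.toReal_ofReal hq.le, norm_eq_abs]
  exact hP.integrableOn_Ioc (hh.norm.aemeasurable.pow_const q).aestronglyMeasurable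

end IsPFunctionOn

theorem abs_intervalIntegral_mul_le_Lp_mul_Lq {u v p q : ℝ} (huv : u ≤ v) {φ ψ : ℝ → ℝ}
    (hpq : p.HolderConjugate q)
    (hφ : MemLp φ (ENNReal.ofReal p) (volume.restrict (Ioc u v)))
    (hψ : MemLp ψ (ENNReal.ofReal q) (volume.restrict (Ioc u v))) :
    |∫ t in u..v, φ t * ψ t| ≤
      (∫ t in u..v, |φ t| ^ p) ^ (1 / p) * (∫ t in u..v, |ψ t| ^ q) ^ (1 / q) := by
  simp only [integral_of_le huv, ← norm_eq_abs]
  exact (MeasureTheory.norm_integral_le_integral_norm _).trans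
    (by simpa only [norm_mul] using integral_mul_norm_le_Lp_mul_Lq hpq hφ hψ)

theorem abs_integral_sub_mul_le_of_isPFunctionOn {h : ℝ → ℝ} {u v s p q : ℝ} (huv : u ≤ v)
    (hpq : p.HolderConjugate q) (hP : IsPFunctionOn (fun t => |h t| ^ q) (Icc u v))
    (hh : AEStronglyMeasurable h (volume.restrict (Ioc u v))) :
    |∫ t in u..v, (t - s) * h t| ≤
      (∫ t in u..v, |t - s| ^ p) ^ (1 / p) * ((v - u) * (|h u| ^ q + |h v| ^ q)) ^ (1 / q) := by
  have hint : IntegrableOn (fun t => |h t| ^ q) (Ioc u v) :=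
    hP.integrableOn_Ioc (hh.norm.aemeasurable.pow_const q).aestronglyMeasurable
  have hkernel : MemLp (fun t => t - s) (ENNReal.ofReal p) (volume.restrict (Ioc u v)) :=
    (Monotone.monotoneOn (f := fun t : ℝ => t - s) (fun _ _ h => sub_le_sub_right h s) _
      |>.memLp_isCompact isCompact_Icc).mono_measure
        (Measure.restrict_mono Ioc_subset_Icc_self le_rfl)
  have hkernel_nonneg : 0 ≤ ∫ t in u..v, |t - s| ^ p :=
    integral_nonneg huv fun t _ => by positivity
  have hG : ∫ t in u..v, |h t| ^ q ≤ (v - u) * (|h u| ^ q + |h v| ^ q) :=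
    hP.integral_le (left_mem_Icc.2 huv) (right_mem_Icc.2 huv) huv
      ((intervalIntegrable_iff_integrableOn_Ioc_of_le huv).2 hint)
  exact (abs_intervalIntegral_mul_le_Lp_mul_Lq huv hpq hkernel
    (hP.memLp_of_abs_rpow hpq.symm.pos hh)).trans <| mul_le_mul_of_nonneg_left
      (rpow_le_rpow (integral_nonneg huv fun t _ => by positivity) hG hpq.symm.one_div_nonneg)
      (rpow_nonneg hkernel_nonneg _)

theorem integral_sub_mul_deriv_eq {g g' : ℝ → ℝ} {u v : ℝ} (s : ℝ)
    (hg : ∀ t ∈ uIcc u v, HasDerivAt g (g' t) t) (hg' : IntervalIntegrable g' volume u v) :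
    ∫ t in u..v, (t - s) * g' t = (v - s) * g v - (u - s) * g u - ∫ t in u..v, g t := by
  simpa only [one_mul] using integral_mul_deriv_eq_deriv_mul
    (fun t _ => (hasDerivAt_id' t).sub_const s) hg intervalIntegrable_const hg'

section Rescaled

variable {F F' : ℝ → ℝ} {α lam : ℝ}

theorem weighted_sub_integral_eq_integral_kernel_mul_deriv (hα : α ∈ Icc (0 : ℝ) 1)
    (hF : ∀ t ∈ Icc (0 : ℝ) 1, HasDerivAt F (F' t) t) (hF' : IntervalIntegrable F' volume 0 1) :
    lam * (α * F 0 + (1 - α) * F 1) + (1 - lam) * F (1 - α) - ∫ t in 0..1, F t =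
      (∫ t in 0..1 - α, (t - α * lam) * F' t) +
        ∫ t in 1 - α..1, (t - (1 - lam * (1 - α))) * F' t := by
  have h₀ : (0 : ℝ) ∈ Icc (0 : ℝ) 1 := left_mem_Icc.2 zero_le_one
  have h₁ : (1 : ℝ) ∈ Icc (0 : ℝ) 1 := right_mem_Icc.2 zero_le_one
  have hc : 1 - α ∈ Icc (0 : ℝ) 1 := ⟨by linarith [hα.2], by linarith [hα.1]⟩
  have hsub : ∀ {u v}, u ∈ Icc (0 : ℝ) 1 → v ∈ Icc (0 : ℝ) 1 → uIcc u v ⊆ uIcc 0 1 :=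
    fun hu hv => uIcc_of_le (zero_le_one' ℝ) ▸ uIcc_subset_Icc hu hv
  have hFi : ∀ {u v}, u ∈ Icc (0 : ℝ) 1 → v ∈ Icc (0 : ℝ) 1 → IntervalIntegrable F volume u v :=
    fun hu hv => ContinuousOn.intervalIntegrable fun t ht =>
      (hF t (uIcc_subset_Icc hu hv ht)).continuousAt.continuousWithinAt
  have hleft := integral_sub_mul_deriv_eq (α * lam)
    (fun t ht => hF t (uIcc_subset_Icc h₀ hc ht)) (hF'.mono_set (hsub h₀ hc))
  have hright := integral_sub_mul_deriv_eq (1 - lam * (1 - α))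
    (fun t ht => hF t (uIcc_subset_Icc hc h₁ ht)) (hF'.mono_set (hsub hc h₁))
  rw [hleft, hright, ← integral_add_adjacent_intervals (hFi h₀ hc) (hFi hc h₁)]
  ring

theorem abs_weighted_sub_integral_le {p q : ℝ} (hα : α ∈ Icc (0 : ℝ) 1)
    (hpq : p.HolderConjugate q) (hF : ∀ t ∈ Icc (0 : ℝ) 1, HasDerivAt F (F' t) t)
    (hF' : AEStronglyMeasurable F' (volume.restrict (Ioc 0 1)))
    (hP : IsPFunctionOn (fun t => |F' t| ^ q) (Icc 0 1)) :
    |lam * (α * F 0 + (1 - α) * F 1) + (1 - lam) * F (1 - α) - ∫ t in 0..1, F t| ≤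
      (∫ t in 0..1 - α, |t - α * lam| ^ p) ^ (1 / p) *
          ((1 - α) * (|F' (1 - α)| ^ q + |F' 0| ^ q)) ^ (1 / q) +
        (∫ t in 1 - α..1, |t - (1 - lam * (1 - α))| ^ p) ^ (1 / p) *
          (α * (|F' (1 - α)| ^ q + |F' 1| ^ q)) ^ (1 / q) := by
  have hc₀ : 0 ≤ 1 - α := by linarith [hα.2]
  have hc₁ : 1 - α ≤ 1 := by linarith [hα.1]
  have hF'int : IntervalIntegrable F' volume 0 1 :=
    (intervalIntegrable_iff_integrableOn_Ioc_of_le zero_le_one).2 <|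
      (hP.memLp_of_abs_rpow hpq.symm.pos hF').integrable (ENNReal.one_le_ofReal.2 hpq.symm.lt.le)
  have hF'_on {u v : ℝ} (hu : 0 ≤ u) (hv : v ≤ 1) :
      AEStronglyMeasurable F' (volume.restrict (Ioc u v)) :=
    hF'.mono_measure (Measure.restrict_mono (Ioc_subset_Ioc hu hv) le_rfl)
  rw [weighted_sub_integral_eq_integral_kernel_mul_deriv hα hF hF'int]
  refine (abs_add_le _ _).trans (add_le_add ?_ ?_)
  · refine (abs_integral_sub_mul_le_of_isPFunctionOn hc₀ hpq
      (hP.mono (Icc_subset_Icc le_rfl hc₁)) (hF'_on le_rfl hc₁)).trans_eq ?_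
    rw [sub_zero, add_comm]
  · refine (abs_integral_sub_mul_le_of_isPFunctionOn hc₁ hpq
      (hP.mono (Icc_subset_Icc hc₀ le_rfl)) (hF'_on hc₀ le_rfl)).trans_eq ?_
    rw [sub_sub_cancel]

end Rescaled

theorem abs_weighted_sub_average_le {f f' : ℝ → ℝ} {a b α lam p q e₁ e₂ : ℝ} (hab : a < b)
    (hα : α ∈ Icc (0 : ℝ) 1) (hpq : p.HolderConjugate q)
    (hdf : ∀ x ∈ Icc a b, HasDerivAt f (f' x) x)
    (hP : IsPFunctionOn (fun x => |f' x| ^ q) (Icc a b))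
    (he₁ : ∫ t in 0..1 - α, |t - α * lam| ^ p = e₁ / (p + 1))
    (he₂ : ∫ t in 1 - α..1, |t - (1 - lam * (1 - α))| ^ p = e₂ / (p + 1)) :
    |lam * (α * f a + (1 - α) * f b) + (1 - lam) * f (α * a + (1 - α) * b)
        - 1 / (b - a) * ∫ x in a..b, f x|
      ≤ (b - a) * (1 / (p + 1)) ^ (1 / p)
          * (e₁ ^ (1 / p) * ((1 - α) * (|f' ((1 - α) * b + α * a)| ^ q + |f' a| ^ q)) ^ (1 / q)
            + e₂ ^ (1 / p) * (α * (|f' ((1 - α) * b + α * a)| ^ q + |f' b| ^ q)) ^ (1 / q)) := by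
  have hba : 0 < b - a := sub_pos.2 hab
  have hφ : MapsTo (fun t => a + (b - a) * t) (Icc 0 1) (Icc a b) := fun t ht =>
    ⟨by nlinarith [ht.1], by nlinarith [ht.2]⟩
  have hderiv : ∀ t ∈ Icc (0 : ℝ) 1,
      HasDerivAt (fun t => f (a + (b - a) * t) / (b - a)) (f' (a + (b - a) * t)) t := by
    intro t ht
    have := ((hdf _ (hφ ht)).comp t
      (((hasDerivAt_id' t).const_mul (b - a)).const_add a)).div_const (b - a)
    simpa only [Function.comp_def, mul_one, mul_div_cancel_right₀ _ hba.ne'] using this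
  -- on `[a, b]`, `f'` agrees with the Borel measurable function `deriv f`
  have hmeas : AEStronglyMeasurable (fun t => f' (a + (b - a) * t)) (volume.restrict (Ioc 0 1)) :=
    ((measurable_deriv f).comp (by fun_prop)).aestronglyMeasurable.congr <|
      (ae_restrict_iff' measurableSet_Ioc).2 <| ae_of_all _ fun t ht =>
        (hdf _ (hφ (Ioc_subset_Icc_self ht))).deriv
  have hbound := abs_weighted_sub_integral_le (lam := lam) (p := p) hα hpq hderiv hmeas
    (hP.comp_affine hφ)
  have hscale (x : ℝ) : (b - a) * |x| = |(b - a) * x| := by rw [abs_mul, abs_of_pos hba]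
  have hp₁ : 0 < p + 1 := by linarith [hpq.pos]
  have hc₀ : 0 ≤ 1 - α := by linarith [hα.2]
  have hc₁ : 1 - α ≤ 1 := by linarith [hα.1]
  refine (le_of_eq ?_).trans ((mul_le_mul_of_nonneg_left hbound hba.le).trans_eq ?_)
  · have hA : a + (b - a) * (1 - α) = α * a + (1 - α) * b := by ring
    rw [hscale]
    simp only [mul_zero, add_zero, mul_one, add_sub_cancel, hA, intervalIntegral.integral_div,
      intervalIntegral.integral_comp_add_mul f hba.ne', smul_eq_mul]
    congr 1
    field_simp
  · have hA : a + (b - a) * (1 - α) = (1 - α) * b + α * a := by ring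
    have hK₁ : 0 ≤ e₁ / (p + 1) := he₁ ▸ integral_nonneg hc₀ fun _ _ => by positivity
    have hK₂ : 0 ≤ e₂ / (p + 1) := he₂ ▸ integral_nonneg hc₁ fun _ _ => by positivity
    rw [he₁, he₂, div_rpow_eq_one_div_rpow_mul _ hp₁ hK₁, div_rpow_eq_one_div_rpow_mul _ hp₁ hK₂,
      hA, mul_zero, add_zero, mul_one, add_sub_cancel]
    ring

theorem stmt_7_general (I : Set ℝ) (hI : Convex ℝ I) (f f' : ℝ → ℝ)
    (a b : ℝ) (ha : a ∈ interior I) (hb : b ∈ interior I) (hab : a < b)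
    (hdf : ∀ x ∈ interior I, HasDerivAt f (f' x) x)
    (α lam : ℝ) (hα : α ∈ Set.Icc (0:ℝ) 1) (hlam : lam ∈ Set.Icc (0:ℝ) 1)
    (p q : ℝ) (hp : 1 < p) (hpq : 1 / p + 1 / q = 1)
    (hP : IsPFunctionOn (fun x => |f' x| ^ q) (Set.Icc a b)) :
    (α * lam ≤ 1 - α ∧ 1 - α ≤ 1 - lam * (1 - α) →
      |lam * (α * f a + (1 - α) * f b) + (1 - lam) * f (α * a + (1 - α) * b)
          - (1 / (b - a)) * ∫ x in a..b, f x|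
        ≤ (b - a) * (1 / (p + 1)) ^ (1 / p)
            * ((eps1 α lam p) ^ (1 / p)
                * ((1 - α) * (|f' ((1 - α) * b + α * a)| ^ q + |f' a| ^ q)) ^ (1 / q)
              + (eps1 (1 - α) lam p) ^ (1 / p)
                * (α * (|f' ((1 - α) * b + α * a)| ^ q + |f' b| ^ q)) ^ (1 / q))) ∧
    (α * lam ≤ 1 - lam * (1 - α) ∧ 1 - lam * (1 - α) ≤ 1 - α →
      |lam * (α * f a + (1 - α) * f b) + (1 - lam) * f (α * a + (1 - α) * b)
          - (1 / (b - a)) * ∫ x in a..b, f x|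
        ≤ (b - a) * (1 / (p + 1)) ^ (1 / p)
            * ((eps1 α lam p) ^ (1 / p)
                * ((1 - α) * (|f' ((1 - α) * b + α * a)| ^ q + |f' a| ^ q)) ^ (1 / q)
              + (eps2 (1 - α) lam p) ^ (1 / p)
                * (α * (|f' ((1 - α) * b + α * a)| ^ q + |f' b| ^ q)) ^ (1 / q))) ∧
    (1 - α ≤ α * lam ∧ α * lam ≤ 1 - lam * (1 - α) →
      |lam * (α * f a + (1 - α) * f b) + (1 - lam) * f (α * a + (1 - α) * b)
          - (1 / (b - a)) * ∫ x in a..b, f x|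
        ≤ (b - a) * (1 / (p + 1)) ^ (1 / p)
            * ((eps2 α lam p) ^ (1 / p)
                * ((1 - α) * (|f' ((1 - α) * b + α * a)| ^ q + |f' a| ^ q)) ^ (1 / q)
              + (eps1 (1 - α) lam p) ^ (1 / p)
                * (α * (|f' ((1 - α) * b + α * a)| ^ q + |f' b| ^ q)) ^ (1 / q))) := by
  have hpq' : p.HolderConjugate q :=
    holderConjugate_iff.2 ⟨hp, by simpa only [one_div] using hpq⟩
  have hIcc : Icc a b ⊆ interior I := segment_eq_Icc hab.le ▸ hI.interior.segment_subset ha hb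
  have hdf' : ∀ x ∈ Icc a b, HasDerivAt f (f' x) x := fun x hx => hdf x (hIcc hx)
  have hp₀ : 0 ≤ p := by linarith
  have hα₁ : 1 - α ≤ 1 := by linarith [hα.1]
  have hαlam : 0 ≤ α * lam := mul_nonneg hα.1 hlam.1
  have hαlam' : 0 ≤ (1 - α) * lam := mul_nonneg (by linarith [hα.2]) hlam.1
  have hreflect := integral_abs_sub_rpow_reflect (1 - α) lam p
  refine ⟨fun ⟨h₁, h₂⟩ => ?_, fun ⟨h₁, h₂⟩ => ?_, fun ⟨h₁, h₂⟩ => ?_⟩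
  · exact abs_weighted_sub_average_le hab hα hpq' hdf' hP
      (integral_abs_sub_rpow_eq_eps1 hp₀ hαlam h₁)
      (hreflect.trans (integral_abs_sub_rpow_eq_eps1 hp₀ hαlam' (by linarith)))
  · exact abs_weighted_sub_average_le hab hα hpq' hdf' hP
      (integral_abs_sub_rpow_eq_eps1 hp₀ hαlam (by linarith))
      (hreflect.trans (integral_abs_sub_rpow_eq_eps2 hp₀ hα₁ (by linarith)))
  · exact abs_weighted_sub_average_le hab hα hpq' hdf' hP
      (integral_abs_sub_rpow_eq_eps2 hp₀ hα.2 h₁)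
      (hreflect.trans (integral_abs_sub_rpow_eq_eps1 hp₀ hαlam' (by linarith)))

theorem stmt_7 (I : Set ℝ) (hI : Convex ℝ I) (f f' : ℝ → ℝ)
    (a b : ℝ) (ha : a ∈ interior I) (hb : b ∈ interior I) (hab : a < b)
    (hdf : ∀ x ∈ interior I, HasDerivAt f (f' x) x)
    (hint : IntervalIntegrable f' MeasureTheory.volume a b)
    (α lam : ℝ) (hα : α ∈ Set.Icc (0:ℝ) 1) (hlam : lam ∈ Set.Icc (0:ℝ) 1)
    (p q : ℝ) (hp : 1 < p) (hq : 1 < q) (hpq : 1 / p + 1 / q = 1)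
    (hP : IsPFunctionOn (fun x => |f' x| ^ q) (Set.Icc a b)) :
    (α * lam ≤ 1 - α ∧ 1 - α ≤ 1 - lam * (1 - α) →
      |lam * (α * f a + (1 - α) * f b) + (1 - lam) * f (α * a + (1 - α) * b)
          - (1 / (b - a)) * ∫ x in a..b, f x|
        ≤ (b - a) * (1 / (p + 1)) ^ (1 / p)
            * ((eps1 α lam p) ^ (1 / p)
                * ((1 - α) * (|f' ((1 - α) * b + α * a)| ^ q + |f' a| ^ q)) ^ (1 / q)
              + (eps1 (1 - α) lam p) ^ (1 / p)
                * (α * (|f' ((1 - α) * b + α * a)| ^ q + |f' b| ^ q)) ^ (1 / q))) ∧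
    (α * lam ≤ 1 - lam * (1 - α) ∧ 1 - lam * (1 - α) ≤ 1 - α →
      |lam * (α * f a + (1 - α) * f b) + (1 - lam) * f (α * a + (1 - α) * b)
          - (1 / (b - a)) * ∫ x in a..b, f x|
        ≤ (b - a) * (1 / (p + 1)) ^ (1 / p)
            * ((eps1 α lam p) ^ (1 / p)
                * ((1 - α) * (|f' ((1 - α) * b + α * a)| ^ q + |f' a| ^ q)) ^ (1 / q)
              + (eps2 (1 - α) lam p) ^ (1 / p)
                * (α * (|f' ((1 - α) * b + α * a)| ^ q + |f' b| ^ q)) ^ (1 / q))) ∧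
    (1 - α ≤ α * lam ∧ α * lam ≤ 1 - lam * (1 - α) →
      |lam * (α * f a + (1 - α) * f b) + (1 - lam) * f (α * a + (1 - α) * b)
          - (1 / (b - a)) * ∫ x in a..b, f x|
        ≤ (b - a) * (1 / (p + 1)) ^ (1 / p)
            * ((eps2 α lam p) ^ (1 / p)
                * ((1 - α) * (|f' ((1 - α) * b + α * a)| ^ q + |f' a| ^ q)) ^ (1 / q)
              + (eps1 (1 - α) lam p) ^ (1 / p)
                * (α * (|f' ((1 - α) * b + α * a)| ^ q + |f' b| ^ q)) ^ (1 / q))) :=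
  stmt_7_general I hI f f' a b ha hb hab hdf α lam hα hlam p q hp hpq hP
end

section
/- Let f : I ⊆ ℝ → ℝ be differentiable on I° with f' integrable on [a,b], where a, b ∈ I° with a < b, and let q > 1 with 1/p + 1/q = 1. Suppose |f'|^q is a P-function on [a,b]. Then |f((a+b)/2) - (1/(b-a)) ∫_a^b f(x) dx| ≤ ((b-a)/4)(1/(p+1))^{1/p} · [(|f'((a+b)/2)|^q + |f'(a)|^q)^{1/q} + (|f'((a+b)/2)|^q + |f'(b)|^q)^{1/q}]. -/
open MeasureTheory Set Real

theorem stmt_9 (I : Set ℝ) (hI : Convex ℝ I) (f f' : ℝ → ℝ)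
    (a b : ℝ) (ha : a ∈ interior I) (hb : b ∈ interior I) (hab : a < b)
    (hdf : ∀ x ∈ interior I, HasDerivAt f (f' x) x)
    (hint : IntervalIntegrable f' MeasureTheory.volume a b)
    (p q : ℝ) (hp : 1 < p) (hq : 1 < q) (hpq : 1 / p + 1 / q = 1)
    (hP : IsPFunctionOn (fun x => |f' x| ^ q) (Set.Icc a b)) :
    |f ((a + b) / 2) - (1 / (b - a)) * ∫ x in a..b, f x|
      ≤ ((b - a) / 4) * (1 / (p + 1)) ^ (1 / p)
        * ((|f' ((a + b) / 2)| ^ q + |f' a| ^ q) ^ (1 / q)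
          + (|f' ((a + b) / 2)| ^ q + |f' b| ^ q) ^ (1 / q)) := by
  set m : ℝ := (a + b) / 2 with hm
  have hma : a < m := by rw [hm]; linarith
  have hbm : m < b := by rw [hm]; linarith
  have hIcc : Set.Icc a b ⊆ interior I := (hI.interior.ordConnected).out ha hb
  have hderiv : ∀ x ∈ Set.Icc a b, HasDerivAt f (f' x) x := fun x hx => hdf x (hIcc hx)
  have hcont : ContinuousOn f (Set.Icc a b) :=
    fun x hx => (hderiv x hx).continuousAt.continuousWithinAt
  have hq0 : (0:ℝ) < q := by linarith
  have hmmem : m ∈ Set.Icc a b := ⟨hma.le, hbm.le⟩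
  have hamem : a ∈ Set.Icc a b := ⟨le_rfl, hab.le⟩
  have hbmem : b ∈ Set.Icc a b := ⟨hab.le, le_rfl⟩
  set CA : ℝ := (|f' m| ^ q + |f' a| ^ q) ^ (1 / q) with hCA
  set CB : ℝ := (|f' m| ^ q + |f' b| ^ q) ^ (1 / q) with hCB
  have hCA0 : 0 ≤ CA := Real.rpow_nonneg (by positivity) _
  have hCB0 : 0 ≤ CB := Real.rpow_nonneg (by positivity) _
  -- pointwise bounds from the P-function property
  have key : ∀ c : ℝ, c ∈ Set.Icc a b → ∀ x ∈ Set.uIcc m c,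
      |f' x| ≤ (|f' m| ^ q + |f' c| ^ q) ^ (1 / q) := by
    intro c hc x hx
    have hxab : x ∈ Set.Icc a b := by
      rcases Set.mem_uIcc.1 hx with h | h
      · exact ⟨le_trans hmmem.1 h.1, le_trans h.2 hc.2⟩
      · exact ⟨le_trans hc.1 h.1, le_trans h.2 hmmem.2⟩
    -- write x as convex combination of m and c
    have hxq : |f' x| ^ q ≤ |f' m| ^ q + |f' c| ^ q := by
      have hseg : x ∈ segment ℝ m c := by
        rwa [segment_eq_uIcc]
      obtain ⟨u, v, hu, hv, huv, hxe⟩ := hseg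
      have h1 : (1 : ℝ) - u = v := by linarith
      have := hP.2 m hmmem c hc u ⟨hu, by linarith⟩
      rw [h1] at this
      simp only [smul_eq_mul] at hxe
      rw [hxe] at this
      simpa using this
    calc |f' x| = (|f' x| ^ q) ^ (1 / q) := by
          rw [← Real.rpow_mul (abs_nonneg _), mul_one_div_cancel hq0.ne', Real.rpow_one]
      _ ≤ (|f' m| ^ q + |f' c| ^ q) ^ (1 / q) :=
          Real.rpow_le_rpow (by positivity) hxq (by positivity)
  -- integrability
  have hsub1 : Set.uIcc a m ⊆ Set.uIcc a b := by
    rw [Set.uIcc_of_le hma.le, Set.uIcc_of_le hab.le]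
    exact Set.Icc_subset_Icc le_rfl hbm.le
  have hsub2 : Set.uIcc m b ⊆ Set.uIcc a b := by
    rw [Set.uIcc_of_le hbm.le, Set.uIcc_of_le hab.le]
    exact Set.Icc_subset_Icc hma.le le_rfl
  have hint1 : IntervalIntegrable f' volume a m := hint.mono_set hsub1
  have hint2 : IntervalIntegrable f' volume m b := hint.mono_set hsub2
  have hfc1 : IntervalIntegrable f volume a m :=
    (hcont.mono (by rw [Set.uIcc_of_le hma.le]; exact Set.Icc_subset_Icc le_rfl hbm.le)).intervalIntegrable
  have hfc2 : IntervalIntegrable f volume m b :=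
    (hcont.mono (by rw [Set.uIcc_of_le hbm.le]; exact Set.Icc_subset_Icc hma.le le_rfl)).intervalIntegrable
  -- integration by parts
  have ibp1 : ∫ x in a..m, (x - a) * f' x = (m - a) * f m - ∫ x in a..m, f x := by
    have := intervalIntegral.integral_mul_deriv_eq_deriv_mul
      (u := fun x => x - a) (u' := fun _ => 1) (v := f) (v' := f')
      (fun x hx => (hasDerivAt_id x).sub_const a)
      (fun x hx => hderiv x (by
        rw [Set.uIcc_of_le hma.le] at hx
        exact ⟨hx.1, le_trans hx.2 hbm.le⟩))
      intervalIntegrable_const hint1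
    simpa using this
  have ibp2 : ∫ x in m..b, (x - b) * f' x = (b - m) * f m - ∫ x in m..b, f x := by
    have := intervalIntegral.integral_mul_deriv_eq_deriv_mul
      (u := fun x => x - b) (u' := fun _ => 1) (v := f) (v' := f')
      (a := m) (b := b)
      (fun x hx => (hasDerivAt_id x).sub_const b)
      (fun x hx => hderiv x (by
        rw [Set.uIcc_of_le hbm.le] at hx
        exact ⟨le_trans hma.le hx.1, hx.2⟩))
      intervalIntegrable_const hint2
    simp at this
    linarith [this]
  have hadd : (∫ x in a..m, f x) + ∫ x in m..b, f x = ∫ x in a..b, f x :=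
    intervalIntegral.integral_add_adjacent_intervals hfc1 hfc2
  -- the identity
  have hba : (0:ℝ) < b - a := by linarith
  have hiden : f m - (1 / (b - a)) * ∫ x in a..b, f x
      = (1 / (b - a)) * ((∫ x in a..m, (x - a) * f' x) + ∫ x in m..b, (x - b) * f' x) := by
    rw [ibp1, ibp2, ← hadd]
    field_simp
    ring
  -- bound the first integral
  have hb1 : |∫ x in a..m, (x - a) * f' x| ≤ (b - a) ^ 2 / 8 * CA := by
    have habs : |∫ x in a..m, (x - a) * f' x| ≤ ∫ x in a..m, |(x - a) * f' x| :=
      intervalIntegral.abs_integral_le_integral_abs hma.le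
    have hi1 : IntervalIntegrable (fun x => |(x - a) * f' x|) volume a m :=
      (hint1.continuousOn_mul (by fun_prop)).abs
    have hi2 : IntervalIntegrable (fun x => (x - a) * CA) volume a m :=
      (continuous_id.sub continuous_const).mul continuous_const |>.intervalIntegrable a m
    have hmono : ∫ x in a..m, |(x - a) * f' x| ≤ ∫ x in a..m, (x - a) * CA := by
      apply intervalIntegral.integral_mono_on hma.le hi1 hi2
      intro x hx
      rw [abs_mul, abs_of_nonneg (by linarith [hx.1] : (0:ℝ) ≤ x - a)]
      apply mul_le_mul_of_nonneg_left _ (by linarith [hx.1])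
      exact key a hamem x (by rw [Set.uIcc_of_ge hma.le]; exact hx)
    have hval : ∫ x in a..m, (x - a) * CA = (b - a) ^ 2 / 8 * CA := by
      rw [intervalIntegral.integral_mul_const]
      have : ∫ x in a..m, (x - a) = (m - a) ^ 2 / 2 := by
        rw [intervalIntegral.integral_sub (continuous_id'.intervalIntegrable _ _) intervalIntegrable_const]
        simp [integral_id]
        ring
      rw [this, hm]
      ring
    linarith
  -- bound the second integral
  have hb2 : |∫ x in m..b, (x - b) * f' x| ≤ (b - a) ^ 2 / 8 * CB := by
    have habs : |∫ x in m..b, (x - b) * f' x| ≤ ∫ x in m..b, |(x - b) * f' x| :=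
      intervalIntegral.abs_integral_le_integral_abs hbm.le
    have hi1 : IntervalIntegrable (fun x => |(x - b) * f' x|) volume m b :=
      (hint2.continuousOn_mul (by fun_prop)).abs
    have hi2 : IntervalIntegrable (fun x => (b - x) * CB) volume m b :=
      (continuous_const.sub continuous_id).mul continuous_const |>.intervalIntegrable m b
    have hmono : ∫ x in m..b, |(x - b) * f' x| ≤ ∫ x in m..b, (b - x) * CB := by
      apply intervalIntegral.integral_mono_on hbm.le hi1 hi2
      intro x hx
      rw [abs_mul, abs_sub_comm, abs_of_nonneg (by linarith [hx.2] : (0:ℝ) ≤ b - x)]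
      apply mul_le_mul_of_nonneg_left _ (by linarith [hx.2])
      exact key b hbmem x (by rw [Set.uIcc_of_le hbm.le]; exact hx)
    have hval : ∫ x in m..b, (b - x) * CB = (b - a) ^ 2 / 8 * CB := by
      rw [intervalIntegral.integral_mul_const]
      have : ∫ x in m..b, (b - x) = (b - m) ^ 2 / 2 := by
        rw [intervalIntegral.integral_sub intervalIntegrable_const (continuous_id'.intervalIntegrable _ _)]
        simp [integral_id]
        ring
      rw [this, hm]
      ring
    linarith
  -- main bound
  have hmain : |f m - (1 / (b - a)) * ∫ x in a..b, f x| ≤ (b - a) / 8 * (CA + CB) := by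
    rw [hiden, abs_mul, abs_of_nonneg (by positivity : (0:ℝ) ≤ 1 / (b - a))]
    calc (1 / (b - a)) * |(∫ x in a..m, (x - a) * f' x) + ∫ x in m..b, (x - b) * f' x|
        ≤ (1 / (b - a)) * ((b - a) ^ 2 / 8 * CA + (b - a) ^ 2 / 8 * CB) := by
          apply mul_le_mul_of_nonneg_left _ (by positivity)
          exact le_trans (abs_add_le _ _) (add_le_add hb1 hb2)
      _ = (b - a) / 8 * (CA + CB) := by field_simp
  -- (1/(p+1))^(1/p) ≥ 1/2
  have hbern : p + 1 ≤ (2:ℝ) ^ p := by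
    have h := one_add_mul_self_le_rpow_one_add (by norm_num : (-1:ℝ) ≤ 1) hp.le
    have h2 : ((1:ℝ) + 1) = 2 := by norm_num
    rw [h2] at h
    linarith
  have hhalf : (1:ℝ) / 2 ≤ (1 / (p + 1)) ^ (1 / p) := by
    have hp0 : (0:ℝ) < p := by linarith
    have h1 : ((1:ℝ) / 2) ^ p ≤ 1 / (p + 1) := by
      rw [one_div, one_div, Real.inv_rpow (by norm_num : (0:ℝ) ≤ 2)]
      exact inv_anti₀ (by linarith) hbern
    calc (1:ℝ) / 2 = (((1:ℝ) / 2) ^ p) ^ (1 / p) := by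
          rw [← Real.rpow_mul (by norm_num), mul_one_div_cancel hp0.ne', Real.rpow_one]
      _ ≤ (1 / (p + 1)) ^ (1 / p) :=
          Real.rpow_le_rpow (by positivity) h1 (by positivity)
  calc |f m - (1 / (b - a)) * ∫ x in a..b, f x| ≤ (b - a) / 8 * (CA + CB) := hmain
    _ = (b - a) / 4 * (1 / 2) * (CA + CB) := by ring
    _ ≤ (b - a) / 4 * ((1 / (p + 1)) ^ (1 / p)) * (CA + CB) := by
        apply mul_le_mul_of_nonneg_right _ (by positivity)
        apply mul_le_mul_of_nonneg_left hhalf (by positivity)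
    _ = ((b - a) / 4) * (1 / (p + 1)) ^ (1 / p) * (CA + CB) := by ring
end

section
/- Let f : I ⊆ ℝ → ℝ be differentiable on I° with f' integrable on [a,b], where a, b ∈ I° with a < b, and let q > 1 with 1/p + 1/q = 1. Suppose |f'|^q is a P-function on [a,b]. Then |(f(a) + f(b))/2 - (1/(b-a)) ∫_a^b f(x) dx| ≤ ((b-a)/4)(1/(p+1))^{1/p} · [(|f'((a+b)/2)|^q + |f'(a)|^q)^{1/q} + (|f'((a+b)/2)|^q + |f'(b)|^q)^{1/q}]. -/
open MeasureTheory Set Real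

private lemma aux_core {g : ℝ → ℝ} {c d C e : ℝ} (hcd : c ≤ d)
    (hg : IntervalIntegrable g volume c d)
    (hC : ∀ x ∈ Set.Icc c d, |g x| ≤ C)
    (hval : (∫ x in c..d, |x - e| * C) = C * (d - c) ^ 2 / 2) :
    |∫ x in c..d, (x - e) * g x| ≤ C * (d - c) ^ 2 / 2 := by
  have hgint : IntervalIntegrable (fun x => (x - e) * g x) volume c d :=
    hg.continuousOn_mul (by fun_prop)
  have habs : |∫ x in c..d, (x - e) * g x| ≤ ∫ x in c..d, |(x - e) * g x| :=
    intervalIntegral.abs_integral_le_integral_abs hcd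
  have hmono : (∫ x in c..d, |(x - e) * g x|) ≤ ∫ x in c..d, |x - e| * C := by
    apply intervalIntegral.integral_mono_on hcd hgint.abs
      (((continuous_id.sub continuous_const).abs.mul continuous_const).intervalIntegrable c d)
    intro x hx
    rw [abs_mul]
    exact mul_le_mul_of_nonneg_left (hC x hx) (abs_nonneg _)
  linarith

private lemma aux_left {g : ℝ → ℝ} {c d C : ℝ} (hcd : c ≤ d)
    (hg : IntervalIntegrable g volume c d)
    (hC : ∀ x ∈ Set.Icc c d, |g x| ≤ C) :
    |∫ x in c..d, (x - c) * g x| ≤ C * (d - c) ^ 2 / 2 := by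
  apply aux_core hcd hg hC
  have hcongr : (∫ x in c..d, |x - c| * C) = ∫ x in c..d, (x - c) * C := by
    apply intervalIntegral.integral_congr
    intro x hx
    rw [Set.uIcc_of_le hcd] at hx
    simp only
    rw [abs_of_nonneg (by linarith [hx.1])]
  rw [hcongr, intervalIntegral.integral_mul_const,
    intervalIntegral.integral_sub intervalIntegral.intervalIntegrable_id
      (intervalIntegrable_const),
    integral_id, intervalIntegral.integral_const, smul_eq_mul]
  ring

private lemma aux_right {g : ℝ → ℝ} {c d C : ℝ} (hcd : c ≤ d)
    (hg : IntervalIntegrable g volume c d)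
    (hC : ∀ x ∈ Set.Icc c d, |g x| ≤ C) :
    |∫ x in c..d, (x - d) * g x| ≤ C * (d - c) ^ 2 / 2 := by
  apply aux_core hcd hg hC
  have hcongr : (∫ x in c..d, |x - d| * C) = ∫ x in c..d, (d - x) * C := by
    apply intervalIntegral.integral_congr
    intro x hx
    rw [Set.uIcc_of_le hcd] at hx
    simp only
    rw [abs_of_nonpos (by linarith [hx.2]), neg_sub]
  rw [hcongr, intervalIntegral.integral_mul_const,
    intervalIntegral.integral_sub (intervalIntegrable_const)
      intervalIntegral.intervalIntegrable_id,
    integral_id, intervalIntegral.integral_const, smul_eq_mul]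
  ring

theorem stmt_11 (I : Set ℝ) (hI : Convex ℝ I) (f f' : ℝ → ℝ)
    (a b : ℝ) (ha : a ∈ interior I) (hb : b ∈ interior I) (hab : a < b)
    (hdf : ∀ x ∈ interior I, HasDerivAt f (f' x) x)
    (hint : IntervalIntegrable f' MeasureTheory.volume a b)
    (p q : ℝ) (hp : 1 < p) (hq : 1 < q) (hpq : 1 / p + 1 / q = 1)
    (hP : IsPFunctionOn (fun x => |f' x| ^ q) (Set.Icc a b)) :
    |(f a + f b) / 2 - (1 / (b - a)) * ∫ x in a..b, f x|
      ≤ ((b - a) / 4) * (1 / (p + 1)) ^ (1 / p)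
        * ((|f' ((a + b) / 2)| ^ q + |f' a| ^ q) ^ (1 / q)
          + (|f' ((a + b) / 2)| ^ q + |f' b| ^ q) ^ (1 / q)) := by
  have hba : (0:ℝ) < b - a := by linarith
  set m : ℝ := (a + b) / 2 with hm
  have ham : a < m := by rw [hm]; linarith
  have hmb : m < b := by rw [hm]; linarith
  have hma : m ∈ Set.Icc a b := ⟨ham.le, hmb.le⟩
  have hsub : Set.Icc a b ⊆ interior I := by
    rw [← segment_eq_Icc hab.le]
    exact hI.interior.segment_subset ha hb
  set C1 : ℝ := |f' m| ^ q + |f' a| ^ q with hC1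
  set C2 : ℝ := |f' m| ^ q + |f' b| ^ q with hC2
  have hq0 : (0:ℝ) < q := by linarith
  -- pointwise bound on |f'| on the segment between y and m
  have hptbound : ∀ (y : ℝ), y ∈ Set.Icc a b → ∀ x ∈ Set.uIcc y m,
      |f' x| ≤ (|f' m| ^ q + |f' y| ^ q) ^ (1/q) := by
    intro y hy x hx
    have key : |f' x| ^ q ≤ |f' m| ^ q + |f' y| ^ q := by
      rcases le_total y m with h | h
      · rw [Set.uIcc_of_le h] at hx
        obtain ⟨t, s, ht0, hs0, hts, hxeq⟩ := (Convex.mem_Icc h).mp hx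
        have hthis := hP.2 y hy m hma t ⟨ht0, by linarith⟩
        simp only at hthis
        have hx2 : t * y + (1 - t) * m = x := by
          have : s = 1 - t := by linarith
          rw [← this]; linarith [hxeq]
        rw [hx2] at hthis
        linarith
      · rw [Set.uIcc_comm, Set.uIcc_of_le h] at hx
        obtain ⟨t, s, ht0, hs0, hts, hxeq⟩ := (Convex.mem_Icc h).mp hx
        have hthis := hP.2 m hma y hy t ⟨ht0, by linarith⟩
        simp only at hthis
        have hx2 : t * m + (1 - t) * y = x := by
          have : s = 1 - t := by linarith
          rw [← this]; linarith [hxeq]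
        rw [hx2] at hthis
        linarith
    have h1 : |f' x| = (|f' x| ^ q) ^ (1/q) := by
      rw [← Real.rpow_mul (abs_nonneg _), mul_one_div, div_self (ne_of_gt hq0),
        Real.rpow_one]
    rw [h1]
    exact Real.rpow_le_rpow (Real.rpow_nonneg (abs_nonneg _) _) key (by positivity)
  -- integration by parts identity
  have hderiv : ∀ x ∈ Set.uIcc a b, HasDerivAt f (f' x) x := by
    intro x hx
    rw [Set.uIcc_of_le hab.le] at hx
    exact hdf x (hsub hx)
  have hu : ∀ x ∈ Set.uIcc a b, HasDerivAt (fun y => y - m) ((fun _ => (1:ℝ)) x) x :=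
    fun x _ => (hasDerivAt_id x).sub_const m
  have key : (∫ x in a..b, (x - m) * f' x)
      = (b - m) * f b - (a - m) * f a - ∫ x in a..b, (1:ℝ) * f x :=
    intervalIntegral.integral_mul_deriv_eq_deriv_mul hu hderiv
      intervalIntegrable_const hint
  have keyf : (∫ x in a..b, (1:ℝ) * f x) = ∫ x in a..b, f x := by simp
  have hident : (f a + f b) / 2 - (1 / (b - a)) * ∫ x in a..b, f x
      = (1 / (b - a)) * ∫ x in a..b, (x - m) * f' x := by
    rw [key, keyf, hm]
    field_simp
    ring
  -- split the integral
  have hint1 : IntervalIntegrable f' volume a m := by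
    apply hint.mono_set
    rw [Set.uIcc_of_le hab.le, Set.uIcc_of_le ham.le]
    exact Set.Icc_subset_Icc le_rfl hmb.le
  have hint2 : IntervalIntegrable f' volume m b := by
    apply hint.mono_set
    rw [Set.uIcc_of_le hab.le, Set.uIcc_of_le hmb.le]
    exact Set.Icc_subset_Icc ham.le le_rfl
  have hii1 : IntervalIntegrable (fun x => (x - m) * f' x) volume a m :=
    hint1.continuousOn_mul (by fun_prop)
  have hii2 : IntervalIntegrable (fun x => (x - m) * f' x) volume m b :=
    hint2.continuousOn_mul (by fun_prop)
  have hsplit : (∫ x in a..b, (x - m) * f' x)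
      = (∫ x in a..m, (x - m) * f' x) + ∫ x in m..b, (x - m) * f' x :=
    (intervalIntegral.integral_add_adjacent_intervals hii1 hii2).symm
  -- bounds on each piece
  have hb1 : |∫ x in a..m, (x - m) * f' x| ≤ C1 ^ (1/q) * (m - a) ^ 2 / 2 := by
    apply aux_right ham.le hint1
    intro x hx
    exact hptbound a ⟨le_rfl, hab.le⟩ x (by rwa [Set.uIcc_of_le ham.le])
  have hb2 : |∫ x in m..b, (x - m) * f' x| ≤ C2 ^ (1/q) * (b - m) ^ 2 / 2 := by
    apply aux_left hmb.le hint2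
    intro x hx
    exact hptbound b ⟨hab.le, le_rfl⟩ x
      (by rw [Set.uIcc_comm]; rwa [Set.uIcc_of_le hmb.le])
  -- Bernoulli: (1/(p+1))^(1/p) ≥ 1/2
  have hp0 : (0:ℝ) < p := by linarith
  have hbern : p + 1 ≤ (2:ℝ) ^ p := by
    have := one_add_mul_self_le_rpow_one_add (s := 1) (by norm_num) hp.le
    norm_num at this
    linarith
  have hr : (1/2 : ℝ) ≤ (1/(p+1)) ^ (1/p) := by
    have h2p : (0:ℝ) < (2:ℝ) ^ p := Real.rpow_pos_of_pos (by norm_num) p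
    have h2 : (1:ℝ)/(2:ℝ)^p ≤ 1/(p+1) := one_div_le_one_div_of_le (by linarith) hbern
    have hval : ((1:ℝ)/(2:ℝ)^p) ^ (1/p) = 1/2 := by
      rw [one_div ((2:ℝ)^p), ← Real.rpow_neg (by norm_num : (0:ℝ) ≤ 2),
        ← Real.rpow_mul (by norm_num : (0:ℝ) ≤ 2),
        show -p * (1/p) = -1 by field_simp]
      rw [show ((-1:ℝ) = ((-1:ℤ):ℝ)) by norm_num, Real.rpow_intCast]
      norm_num
    calc (1/2:ℝ) = ((1:ℝ)/(2:ℝ)^p) ^ (1/p) := hval.symm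
      _ ≤ (1/(p+1)) ^ (1/p) := Real.rpow_le_rpow (by positivity) h2 (by positivity)
  -- combine
  have hS1 : (0:ℝ) ≤ C1 ^ (1/q) := Real.rpow_nonneg (by positivity) _
  have hS2 : (0:ℝ) ≤ C2 ^ (1/q) := Real.rpow_nonneg (by positivity) _
  have hma2 : m - a = (b - a) / 2 := by rw [hm]; ring
  have hbm2 : b - m = (b - a) / 2 := by rw [hm]; ring
  have hmain : |(f a + f b) / 2 - (1 / (b - a)) * ∫ x in a..b, f x|
      ≤ (b - a) / 8 * (C1 ^ (1/q) + C2 ^ (1/q)) := by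
    rw [hident, hsplit, abs_mul, abs_of_pos (by positivity : (0:ℝ) < 1/(b-a))]
    have htri : |(∫ x in a..m, (x - m) * f' x) + ∫ x in m..b, (x - m) * f' x|
        ≤ C1 ^ (1/q) * (m - a) ^ 2 / 2 + C2 ^ (1/q) * (b - m) ^ 2 / 2 :=
      le_trans (abs_add_le _ _) (by linarith)
    rw [hma2, hbm2] at htri
    calc (1/(b-a)) * |(∫ x in a..m, (x - m) * f' x) + ∫ x in m..b, (x - m) * f' x|
        ≤ (1/(b-a)) * (C1 ^ (1/q) * ((b-a)/2) ^ 2 / 2 + C2 ^ (1/q) * ((b-a)/2) ^ 2 / 2) :=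
          mul_le_mul_of_nonneg_left htri (by positivity)
      _ = (b - a) / 8 * (C1 ^ (1/q) + C2 ^ (1/q)) := by field_simp; ring
  refine le_trans hmain ?_
  have hfinal : (b - a) / 8 * (C1 ^ (1/q) + C2 ^ (1/q))
      ≤ ((b - a) / 4) * (1 / (p + 1)) ^ (1 / p) * (C1 ^ (1/q) + C2 ^ (1/q)) := by
    apply mul_le_mul_of_nonneg_right _ (by linarith)
    nlinarith
  exact le_trans hfinal (le_of_eq (by rw [hC1, hC2, hm]))
end

section
/- Let a, b ∈ ℝ with a < b, let n ∈ ℕ with n ≥ 2, and let q ≥ 1. Then |Aⁿ(a,b) - L_n^n(a,b)| ≤ (n(b-a)/4)(|b|^{(n-1)q} + |a|^{(n-1)q})^{1/q}. -/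
open Real

/-- Lipschitz-type bound for powers. -/
lemma aux_pow_lip (x y K : ℝ) (hx : |x| ≤ K) (hy : |y| ≤ K) (n : ℕ) :
    |x ^ n - y ^ n| ≤ (n : ℝ) * K ^ (n - 1) * |x - y| := by
  have hK : 0 ≤ K := le_trans (abs_nonneg x) hx
  rw [← geom_sum₂_mul, abs_mul]
  have h1 : |∑ i ∈ Finset.range n, x ^ i * y ^ (n - 1 - i)| ≤ (n : ℝ) * K ^ (n - 1) := by
    calc |∑ i ∈ Finset.range n, x ^ i * y ^ (n - 1 - i)|
        ≤ ∑ i ∈ Finset.range n, |x ^ i * y ^ (n - 1 - i)| :=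
          Finset.abs_sum_le_sum_abs _ _
      _ ≤ ∑ _i ∈ Finset.range n, K ^ (n - 1) := by
          refine Finset.sum_le_sum fun i hi => ?_
          rw [abs_mul, abs_pow, abs_pow]
          have h2 : |x| ^ i * |y| ^ (n - 1 - i) ≤ K ^ i * K ^ (n - 1 - i) := by
            have := abs_nonneg x
            have := abs_nonneg y
            gcongr
          refine h2.trans ?_
          rw [← pow_add]
          have h3 : i + (n - 1 - i) = n - 1 := by
            have := Finset.mem_range.mp hi; omega
          rw [h3]
      _ = (n : ℝ) * K ^ (n - 1) := by
          rw [Finset.sum_const, Finset.card_range, nsmul_eq_mul]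
  exact mul_le_mul_of_nonneg_right h1 (abs_nonneg _)

lemma aux_int_bound (a b m K : ℝ) (hab : a ≤ b) (n : ℕ)
    (hlip : ∀ x ∈ Set.Icc a b, |m ^ n - x ^ n| ≤ (n:ℝ) * K ^ (n - 1) * |m - x|) :
    |∫ x in a..b, (m ^ n - x ^ n)| ≤ ∫ x in a..b, ((n:ℝ) * K ^ (n - 1) * |m - x|) := by
  have step1 : |∫ x in a..b, (m ^ n - x ^ n)| ≤ ∫ x in a..b, |m ^ n - x ^ n| :=
    intervalIntegral.abs_integral_le_integral_abs hab
  refine step1.trans ?_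
  apply intervalIntegral.integral_mono_on hab
  · exact ((continuous_const.sub (continuous_pow n)).abs).intervalIntegrable a b
  · exact (continuous_const.mul ((continuous_const.sub continuous_id).abs)).intervalIntegrable a b
  · exact hlip

set_option maxHeartbeats 1000000 in
theorem stmt_13 (a b : ℝ) (hab : a < b) (n : ℕ) (hn : 2 ≤ n) (q : ℝ) (hq : 1 ≤ q) :
    |((a + b) / 2) ^ n - (b ^ (n + 1) - a ^ (n + 1)) / (((n : ℝ) + 1) * (b - a))|
      ≤ ((n : ℝ) * (b - a) / 4) * (|b| ^ (((n : ℝ) - 1) * q) + |a| ^ (((n : ℝ) - 1) * q)) ^ (1 / q) := by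
  have hba : (0:ℝ) < b - a := sub_pos.mpr hab
  have hba' : b - a ≠ 0 := hba.ne'
  set m : ℝ := (a + b) / 2 with hm
  set K : ℝ := max |a| |b| with hKdef
  have hK0 : 0 ≤ K := le_trans (abs_nonneg a) (le_max_left _ _)
  have hq0 : (0:ℝ) < q := lt_of_lt_of_le one_pos hq
  have ham : a ≤ m := by rw [hm]; linarith
  have hmb : m ≤ b := by rw [hm]; linarith
  have hmemK : ∀ x ∈ Set.Icc a b, |x| ≤ K := by
    intro x hx
    refine abs_le.mpr ⟨?_, ?_⟩
    · have h1 := neg_abs_le a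
      have h2 := le_max_left |a| |b|
      have := hx.1
      simp only [hKdef]
      linarith
    · have h1 := le_abs_self b
      have h2 := le_max_right |a| |b|
      have := hx.2
      simp only [hKdef]
      linarith
  have hmK : |m| ≤ K := hmemK m ⟨ham, hmb⟩
  have hn1 : ((n:ℝ) + 1) ≠ 0 := by positivity
  have key : m ^ n - (b ^ (n + 1) - a ^ (n + 1)) / (((n : ℝ) + 1) * (b - a))
      = (b - a)⁻¹ * ∫ x in a..b, (m ^ n - x ^ n) := by
    rw [intervalIntegral.integral_sub (intervalIntegrable_const)
      ((continuous_pow n).intervalIntegrable a b), intervalIntegral.integral_const,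
      integral_pow, smul_eq_mul]
    field_simp
  have hi1 : IntervalIntegrable (fun x => |m - x|) MeasureTheory.volume a m :=
    ((continuous_const.sub continuous_id).abs).intervalIntegrable a m
  have hi2 : IntervalIntegrable (fun x => |m - x|) MeasureTheory.volume m b :=
    ((continuous_const.sub continuous_id).abs).intervalIntegrable m b
  have hcalc : (∫ x in a..b, |m - x|) = (b - a) ^ 2 / 4 := by
    rw [← intervalIntegral.integral_add_adjacent_intervals hi1 hi2]
    have e1 : (∫ x in a..m, |m - x|) = ∫ x in a..m, (m - x) := by
      refine intervalIntegral.integral_congr fun x hx => ?_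
      rw [Set.uIcc_of_le ham] at hx
      exact abs_of_nonneg (by linarith [hx.2])
    have e2 : (∫ x in m..b, |m - x|) = ∫ x in m..b, (x - m) := by
      refine intervalIntegral.integral_congr fun x hx => ?_
      rw [Set.uIcc_of_le hmb] at hx
      rw [abs_of_nonpos (by linarith [hx.1]), neg_sub]
    rw [e1, e2,
      intervalIntegral.integral_sub intervalIntegrable_const
        (intervalIntegral.intervalIntegrable_id),
      intervalIntegral.integral_sub intervalIntegral.intervalIntegrable_id
        intervalIntegrable_const,
      intervalIntegral.integral_const, intervalIntegral.integral_const,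
      integral_id, integral_id, smul_eq_mul, smul_eq_mul, hm]
    ring
  have hint1 : |∫ x in a..b, (m ^ n - x ^ n)|
      ≤ ∫ x in a..b, ((n:ℝ) * K ^ (n - 1) * |m - x|) := by
    exact aux_int_bound a b m K hab.le n
      (fun x hx => aux_pow_lip m x K hmK (hmemK x hx) n)
  -- rpow part
  have hn2 : (2:ℝ) ≤ (n:ℝ) := by exact_mod_cast hn
  have hKpos : 0 < K := by
    rcases eq_or_ne a 0 with ha | ha
    · subst ha
      exact lt_max_iff.mpr (Or.inr (abs_pos.mpr hab.ne'))
    · exact lt_max_iff.mpr (Or.inl (abs_pos.mpr ha))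
  have hcast : ((n - 1 : ℕ) : ℝ) = (n : ℝ) - 1 := by
    have h1 : 1 ≤ n := le_trans one_le_two hn
    push_cast [h1]
    ring
  have hrpow : K ^ (n - 1)
      ≤ (|b| ^ (((n : ℝ) - 1) * q) + |a| ^ (((n : ℝ) - 1) * q)) ^ (1 / q) := by
    have h1 : K ^ (n - 1) = (K ^ (((n:ℝ) - 1) * q)) ^ (1/q) := by
      rw [← Real.rpow_natCast K (n-1), hcast, ← Real.rpow_mul hK0]
      congr 1
      field_simp
    rw [h1]
    refine Real.rpow_le_rpow (by positivity) ?_ (by positivity)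
    rcases max_cases |a| |b| with ⟨hmax, _⟩ | ⟨hmax, _⟩
    · have hb0 := Real.rpow_nonneg (abs_nonneg b) (((n : ℝ) - 1) * q)
      rw [hKdef, hmax]
      linarith
    · have ha0 := Real.rpow_nonneg (abs_nonneg a) (((n : ℝ) - 1) * q)
      rw [hKdef, hmax]
      linarith
  calc |m ^ n - (b ^ (n + 1) - a ^ (n + 1)) / (((n : ℝ) + 1) * (b - a))|
      = (b - a)⁻¹ * |∫ x in a..b, (m ^ n - x ^ n)| := by
        rw [key, abs_mul, abs_inv, abs_of_pos hba]
    _ ≤ (b - a)⁻¹ * ((n:ℝ) * K ^ (n - 1) * ((b - a) ^ 2 / 4)) := by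
        refine mul_le_mul_of_nonneg_left ?_ (inv_nonneg.mpr hba.le)
        refine hint1.trans_eq ?_
        rw [intervalIntegral.integral_const_mul, hcalc]
    _ = ((n:ℝ) * (b - a) / 4) * K ^ (n - 1) := by
        field_simp
    _ ≤ ((n : ℝ) * (b - a) / 4) * (|b| ^ (((n : ℝ) - 1) * q) + |a| ^ (((n : ℝ) - 1) * q)) ^ (1 / q) := by
        refine mul_le_mul_of_nonneg_left hrpow (by positivity)
end

section
/- Let a, b ∈ ℝ with a < b, let n ∈ ℕ with n ≥ 2, and let q ≥ 1. Then |A(aⁿ, bⁿ) - L_n^n(a,b)| ≤ (n(b-a)/4)(|b|^{(n-1)q} + |a|^{(n-1)q})^{1/q}. -/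
open Real

lemma key_aux (a b : ℝ) (hab : a < b) (n : ℕ) (hn : 1 ≤ n) :
    |(a ^ n + b ^ n) / 2 - (b ^ (n + 1) - a ^ (n + 1)) / (((n : ℝ) + 1) * (b - a))|
      ≤ ((n : ℝ) * (b - a) / 4) * (max |a| |b|) ^ (n - 1) := by
  set m : ℝ := (a + b) / 2 with hm
  set t : ℝ := max |a| |b| with ht
  have ht0 : 0 ≤ t := le_trans (abs_nonneg a) (le_max_left _ _)
  set C : ℝ := (n : ℝ) * t ^ (n - 1) with hC
  have hC0 : 0 ≤ C := mul_nonneg (Nat.cast_nonneg n) (pow_nonneg ht0 _)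
  have hba : (0:ℝ) < b - a := sub_pos.mpr hab
  set g : ℝ → ℝ := fun x => (x - m) * ((n : ℝ) * x ^ (n - 1)) with hg
  have hgc : Continuous g := by fun_prop
  -- FTC
  have hderiv : ∀ x ∈ Set.uIcc a b,
      HasDerivAt (fun y => (y - m) * y ^ n) (1 * x ^ n + (x - m) * ((n:ℝ) * x ^ (n-1))) x := by
    intro x _
    exact ((hasDerivAt_id x).sub_const m).mul (hasDerivAt_pow n x)
  have hint : IntervalIntegrable (fun x => 1 * x ^ n + (x - m) * ((n:ℝ) * x ^ (n-1)))
      MeasureTheory.volume a b := by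
    apply Continuous.intervalIntegrable; fun_prop
  have hFTC := intervalIntegral.integral_eq_sub_of_hasDerivAt hderiv hint
  have hsplit : (∫ x in a..b, (1 * x ^ n + (x - m) * ((n:ℝ) * x ^ (n-1))))
      = (∫ x in a..b, 1 * x ^ n) + ∫ x in a..b, g x := by
    apply intervalIntegral.integral_add
    · apply Continuous.intervalIntegrable; fun_prop
    · exact hgc.intervalIntegrable a b
  have hpow : (∫ x in a..b, 1 * x ^ n) = (b ^ (n+1) - a ^ (n+1)) / ((n:ℝ) + 1) := by
    simp [integral_pow]
  have hG : (∫ x in a..b, g x)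
      = (b - a) * ((a ^ n + b ^ n) / 2) - (b ^ (n+1) - a ^ (n+1)) / ((n:ℝ)+1) := by
    have := hFTC
    rw [hsplit, hpow] at this
    have h2 : (∫ x in a..b, g x)
        = ((b - m) * b ^ n - (a - m) * a ^ n) - (b ^ (n+1) - a ^ (n+1)) / ((n:ℝ)+1) := by
      linarith [this]
    rw [h2, hm]; ring
  -- pointwise bound
  have hptwise : ∀ x ∈ Set.Icc a b, |g x| ≤ C * |x - m| := by
    intro x hx
    have hxa := hx.1
    have hxb := hx.2
    have hxt : |x| ≤ t := abs_le_max_abs_abs hxa hxb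
    have h1 : |x| ^ (n-1) ≤ t ^ (n-1) := pow_le_pow_left₀ (abs_nonneg x) hxt _
    have hb2 : (n:ℝ) * |x| ^ (n-1) ≤ C := by
      rw [hC]; exact mul_le_mul_of_nonneg_left h1 (Nat.cast_nonneg n)
    calc |g x| = |x - m| * ((n:ℝ) * |x| ^ (n-1)) := by
          simp only [hg, abs_mul, abs_pow, Nat.abs_cast]
      _ ≤ |x - m| * C := mul_le_mul_of_nonneg_left hb2 (abs_nonneg _)
      _ = C * |x - m| := mul_comm _ _
  -- integral of |x - m|
  have ham : a ≤ m := by rw [hm]; linarith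
  have hmb : m ≤ b := by rw [hm]; linarith
  have hIam : (∫ x in a..m, |x - m|) = (m - a)^2 / 2 := by
    have hcong : (∫ x in a..m, |x - m|) = ∫ x in a..m, (m - x) := by
      apply intervalIntegral.integral_congr
      intro x hx
      rw [Set.uIcc_of_le ham] at hx
      show |x - m| = m - x
      rw [abs_of_nonpos (by linarith [hx.2]), neg_sub]
    rw [hcong]
    have : (∫ x in a..m, (m - x)) = (∫ x in a..m, (m:ℝ)) - ∫ x in a..m, x := by
      apply intervalIntegral.integral_sub
      · exact intervalIntegrable_const
      · exact intervalIntegral.intervalIntegrable_id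
    rw [this, intervalIntegral.integral_const, integral_id]
    simp only [smul_eq_mul]; ring
  have hImb : (∫ x in m..b, |x - m|) = (b - m)^2 / 2 := by
    have hcong : (∫ x in m..b, |x - m|) = ∫ x in m..b, (x - m) := by
      apply intervalIntegral.integral_congr
      intro x hx
      rw [Set.uIcc_of_le hmb] at hx
      show |x - m| = x - m
      exact abs_of_nonneg (by linarith [hx.1])
    rw [hcong]
    have : (∫ x in m..b, (x - m)) = (∫ x in m..b, x) - ∫ x in m..b, (m:ℝ) := by
      apply intervalIntegral.integral_sub
      · exact intervalIntegral.intervalIntegrable_id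
      · exact intervalIntegrable_const
    rw [this, intervalIntegral.integral_const, integral_id]
    simp only [smul_eq_mul]; ring
  have hIabs : (∫ x in a..b, C * |x - m|) = C * ((b - a)^2 / 4) := by
    have habs : (∫ x in a..b, |x - m|) = (b - a)^2 / 4 := by
      have hadd := intervalIntegral.integral_add_adjacent_intervals
        (a := a) (b := m) (c := b) (f := fun x => |x - m|) (μ := MeasureTheory.volume)
        (Continuous.intervalIntegrable (by fun_prop) a m)
        (Continuous.intervalIntegrable (by fun_prop) m b)
      rw [hIam, hImb] at hadd
      rw [← hadd, hm]; ring
    rw [← habs, ← intervalIntegral.integral_const_mul]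
  -- combine
  have hbound : |∫ x in a..b, g x| ≤ C * ((b - a)^2 / 4) := by
    calc |∫ x in a..b, g x| ≤ ∫ x in a..b, |g x| :=
          intervalIntegral.abs_integral_le_integral_abs hab.le
      _ ≤ ∫ x in a..b, C * |x - m| := by
          apply intervalIntegral.integral_mono_on hab.le
          · exact (hgc.abs).intervalIntegrable a b
          · apply Continuous.intervalIntegrable; fun_prop
          · exact hptwise
      _ = C * ((b - a)^2 / 4) := hIabs
  -- rewrite the target
  have hne : ((n:ℝ) + 1) ≠ 0 := by positivity
  have heq : (a ^ n + b ^ n) / 2 - (b ^ (n + 1) - a ^ (n + 1)) / (((n : ℝ) + 1) * (b - a))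
      = (∫ x in a..b, g x) / (b - a) := by
    rw [hG]; field_simp
  rw [heq, abs_div, abs_of_pos hba, div_le_iff₀ hba]
  calc |∫ x in a..b, g x| ≤ C * ((b - a)^2 / 4) := hbound
    _ = (n:ℝ) * (b - a) / 4 * t ^ (n - 1) * (b - a) := by rw [hC]; ring

theorem stmt_14 (a b : ℝ) (hab : a < b) (n : ℕ) (hn : 2 ≤ n) (q : ℝ) (hq : 1 ≤ q) :
    |(a ^ n + b ^ n) / 2 - (b ^ (n + 1) - a ^ (n + 1)) / (((n : ℝ) + 1) * (b - a))|
      ≤ ((n : ℝ) * (b - a) / 4) * (|b| ^ (((n : ℝ) - 1) * q) + |a| ^ (((n : ℝ) - 1) * q)) ^ (1 / q) := by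
  have hkey := key_aux a b hab n (le_trans one_le_two hn)
  set t : ℝ := max |a| |b| with ht
  have ht0 : 0 ≤ t := le_trans (abs_nonneg a) (le_max_left _ _)
  have hq0 : 0 < q := lt_of_lt_of_le one_pos hq
  have hn1 : (1:ℝ) ≤ (n:ℝ) := by exact_mod_cast le_trans one_le_two hn
  have hexp : (0:ℝ) ≤ ((n:ℝ) - 1) * q := by nlinarith
  -- t ^ (n-1) (nat pow) = t ^ ((n:ℝ)-1) (rpow)
  have hcast : (((n - 1 : ℕ)):ℝ) = (n:ℝ) - 1 := by
    have : 1 ≤ n := le_trans one_le_two hn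
    push_cast [Nat.cast_sub this]; ring
  have hpow_eq : t ^ (n - 1) = t ^ ((n:ℝ) - 1) := by
    rw [← Real.rpow_natCast t (n-1), hcast]
  -- t ^ ((n-1)q) ≤ sum
  have hsum : t ^ (((n:ℝ) - 1) * q) ≤ |b| ^ (((n:ℝ) - 1) * q) + |a| ^ (((n:ℝ) - 1) * q) := by
    rcases max_cases |a| |b| with ⟨h1, h2⟩ | ⟨h1, h2⟩
    · rw [ht, h1]
      have : (0:ℝ) ≤ |b| ^ (((n:ℝ) - 1) * q) := Real.rpow_nonneg (abs_nonneg b) _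
      linarith
    · rw [ht, h1]
      have : (0:ℝ) ≤ |a| ^ (((n:ℝ) - 1) * q) := Real.rpow_nonneg (abs_nonneg a) _
      linarith
  have hfinal : t ^ ((n:ℝ) - 1)
      ≤ (|b| ^ (((n : ℝ) - 1) * q) + |a| ^ (((n : ℝ) - 1) * q)) ^ (1 / q) := by
    have h1 : t ^ ((n:ℝ) - 1) = (t ^ (((n:ℝ) - 1) * q)) ^ (1/q) := by
      rw [← Real.rpow_mul ht0]
      congr 1
      field_simp
    rw [h1]
    apply Real.rpow_le_rpow (Real.rpow_nonneg ht0 _) hsum (by positivity)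
  have hcoef : 0 ≤ (n : ℝ) * (b - a) / 4 := by
    have : (0:ℝ) < b - a := sub_pos.mpr hab
    positivity
  calc |(a ^ n + b ^ n) / 2 - (b ^ (n + 1) - a ^ (n + 1)) / (((n : ℝ) + 1) * (b - a))|
      ≤ ((n : ℝ) * (b - a) / 4) * t ^ (n - 1) := hkey
    _ = ((n : ℝ) * (b - a) / 4) * t ^ ((n:ℝ) - 1) := by rw [hpow_eq]
    _ ≤ ((n : ℝ) * (b - a) / 4) * (|b| ^ (((n : ℝ) - 1) * q) + |a| ^ (((n : ℝ) - 1) * q)) ^ (1 / q) :=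
        mul_le_mul_of_nonneg_left hfinal hcoef
end

section
/- Let a, b ∈ ℝ with a < b, let n ∈ ℕ with n ≥ 2, and let p, q > 1 with 1/p + 1/q = 1. Then |(1/3) A(aⁿ, bⁿ) + (2/3) Aⁿ(a,b) - L_n^n(a,b)| ≤ (n(b-a)/12)((1 + 2^{p+1})/(3(p+1)))^{1/p} · [(|A(a,b)|^{(n-1)q} + |a|^{(n-1)q})^{1/q} + (|A(a,b)|^{(n-1)q} + |b|^{(n-1)q})^{1/q}]. -/
open Real intervalIntegral

lemma integral_linear_s15 (c d α β : ℝ) :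
    ∫ x in c..d, (α * x + β) = α * (d^2 - c^2) / 2 + β * (d - c) := by
  have h : ∀ x ∈ Set.uIcc c d, HasDerivAt (fun x => α * x^2 / 2 + β * x) (α * x + β) x := by
    intro x _
    have h1 : HasDerivAt (fun x : ℝ => α * x^2 / 2 + β * x)
        (α * ((2:ℕ) * x ^ (2-1)) / 2 + β * 1) x :=
      (((hasDerivAt_pow 2 x).const_mul α).div_const 2).add ((hasDerivAt_id x).const_mul β)
    convert h1 using 1; push_cast; ring
  rw [intervalIntegral.integral_eq_sub_of_hasDerivAt h
    ((Continuous.intervalIntegrable (by continuity)) c d)]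
  ring

lemma abs_int_le (c d : ℝ) (hcd : c ≤ d) (f ψ : ℝ → ℝ) (hf : Continuous f) (hψ : Continuous ψ)
    (h : ∀ x ∈ Set.Icc c d, |f x| ≤ ψ x) :
    |∫ x in c..d, f x| ≤ ∫ x in c..d, ψ x :=
  (intervalIntegral.abs_integral_le_integral_abs hcd).trans
    (intervalIntegral.integral_mono_on hcd (hf.abs.intervalIntegrable c d)
      (hψ.intervalIntegrable c d) h)

lemma piece_bound (c d C α β α' β' : ℝ) (hcd : c ≤ d) (g : ℝ → ℝ) (hg : Continuous g)
    (hb : ∀ x ∈ Set.Icc c d, |(α * x + β) * g x| ≤ C * (α' * x + β')) :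
    |∫ x in c..d, (α * x + β) * g x| ≤ C * (α' * (d^2 - c^2) / 2 + β' * (d - c)) := by
  have := abs_int_le c d hcd (fun x => (α * x + β) * g x) (fun x => C * (α' * x + β'))
    (by continuity) (by continuity) hb
  rwa [intervalIntegral.integral_const_mul, integral_linear_s15] at this

lemma pow_abs_le (x lo hi M : ℝ) (hlo : lo ≤ x) (hhi : x ≤ hi) (hM : max |lo| |hi| ≤ M)
    (k : ℕ) : |x| ^ k ≤ M ^ k :=
  pow_le_pow_left₀ (abs_nonneg x) ((abs_le_max_abs_abs hlo hhi).trans hM) k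

lemma half_gen (a b lo hi r s : ℝ) (hab : a < b) (hlohi : lo ≤ hi)
    (hrs : r < s) (hs1 : s ≤ 1)
    (hlo : lo = a + r * (b - a)) (hhi : hi = a + s * (b - a)) (n : ℕ)
    (t : ℝ) (hrt : r ≤ t) (hts : t ≤ s) :
    |∫ x in lo..hi, ((x - a)/(b-a) - t) * ((n:ℝ) * x^(n-1))|
      ≤ ((n:ℝ) * (max |lo| |hi|)^(n-1)) * ((b-a) * (((t-r)^2 + (s-t)^2) / 2)) := by
  have hba : (0:ℝ) < b - a := sub_pos.2 hab
  set M : ℝ := max |lo| |hi| with hM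
  set C : ℝ := (n:ℝ) * M^(n-1) with hC
  have hM0 : (0:ℝ) ≤ M := le_max_iff.2 (Or.inl (abs_nonneg lo))
  have hC0 : 0 ≤ C := mul_nonneg (Nat.cast_nonneg n) (pow_nonneg hM0 _)
  set x₀ : ℝ := a + t * (b - a) with hx₀
  have hlx : lo ≤ x₀ := by rw [hlo, hx₀]; nlinarith
  have hxh : x₀ ≤ hi := by rw [hhi, hx₀]; nlinarith
  set α : ℝ := 1/(b-a) with hα
  set β : ℝ := -(a/(b-a)) - t with hβ
  have hfun : ∀ x : ℝ, ((x - a)/(b-a) - t) * ((n:ℝ) * x^(n-1))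
      = (α * x + β) * ((n:ℝ) * x^(n-1)) := by
    intro x; rw [hα, hβ]; ring
  have hgabs : ∀ x : ℝ, lo ≤ x → x ≤ hi → |(n:ℝ) * x^(n-1)| ≤ C := by
    intro x h1 h2
    rw [abs_mul, Nat.abs_cast, abs_pow, hC]
    exact mul_le_mul_of_nonneg_left (pow_abs_le x lo hi M h1 h2 le_rfl _) (Nat.cast_nonneg n)
  have hb1 : ∀ x ∈ Set.Icc lo x₀, |(α * x + β) * ((n:ℝ) * x^(n-1))| ≤ C * (-α * x + -β) := by
    intro x hx
    have hnp : α * x + β ≤ 0 := by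
      have heq : α * x + β = (x - a)/(b-a) - t := by rw [hα, hβ]; ring
      have h6 : (x - a)/(b-a) ≤ t := by
        rw [div_le_iff₀ hba]
        have := hx.2; rw [hx₀] at this; linarith
      linarith [heq ▸ (sub_nonpos.2 h6)]
    have hφ : |α * x + β| = -α * x + -β := by rw [abs_of_nonpos hnp]; ring
    rw [abs_mul]
    calc |α * x + β| * |(n:ℝ) * x^(n-1)|
        ≤ |α * x + β| * C :=
          mul_le_mul_of_nonneg_left (hgabs x (hx.1) (hx.2.trans hxh)) (abs_nonneg _)
      _ = C * (-α * x + -β) := by rw [hφ]; ring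
  have hb2 : ∀ x ∈ Set.Icc x₀ hi, |(α * x + β) * ((n:ℝ) * x^(n-1))| ≤ C * (α * x + β) := by
    intro x hx
    have hnn : 0 ≤ α * x + β := by
      have heq : α * x + β = (x - a)/(b-a) - t := by rw [hα, hβ]; ring
      have h6 : t ≤ (x - a)/(b-a) := by
        rw [le_div_iff₀ hba]
        have := hx.1; rw [hx₀] at this; linarith
      linarith [heq ▸ (sub_nonneg.2 h6)]
    have hφ : |α * x + β| = α * x + β := abs_of_nonneg hnn
    rw [abs_mul]
    calc |α * x + β| * |(n:ℝ) * x^(n-1)|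
        ≤ |α * x + β| * C :=
          mul_le_mul_of_nonneg_left (hgabs x (hlx.trans hx.1) hx.2) (abs_nonneg _)
      _ = C * (α * x + β) := by rw [hφ]; ring
  have hgc : Continuous fun x : ℝ => (n:ℝ) * x^(n-1) := continuous_const.mul (continuous_pow _)
  have hfc : Continuous fun x : ℝ => (α * x + β) * ((n:ℝ) * x^(n-1)) :=
    ((continuous_const.mul continuous_id).add continuous_const).mul hgc
  have hp1 := piece_bound lo x₀ C α β (-α) (-β) hlx (fun x => (n:ℝ) * x^(n-1)) hgc hb1
  have hp2 := piece_bound x₀ hi C α β α β hxh (fun x => (n:ℝ) * x^(n-1)) hgc hb2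
  have hsplit : ∫ x in lo..hi, (α * x + β) * ((n:ℝ) * x^(n-1))
      = (∫ x in lo..x₀, (α * x + β) * ((n:ℝ) * x^(n-1)))
        + ∫ x in x₀..hi, (α * x + β) * ((n:ℝ) * x^(n-1)) :=
    (intervalIntegral.integral_add_adjacent_intervals
      (hfc.intervalIntegrable lo x₀) (hfc.intervalIntegrable x₀ hi)).symm
  have hcongr : (∫ x in lo..hi, ((x - a)/(b-a) - t) * ((n:ℝ) * x^(n-1)))
      = ∫ x in lo..hi, (α * x + β) * ((n:ℝ) * x^(n-1)) := by
    simp only [hfun]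
  rw [hcongr, hsplit]
  calc |(∫ x in lo..x₀, (α * x + β) * ((n:ℝ) * x^(n-1)))
        + ∫ x in x₀..hi, (α * x + β) * ((n:ℝ) * x^(n-1))|
      ≤ |∫ x in lo..x₀, (α * x + β) * ((n:ℝ) * x^(n-1))|
        + |∫ x in x₀..hi, (α * x + β) * ((n:ℝ) * x^(n-1))| := abs_add_le _ _
    _ ≤ C * (-α * (x₀^2 - lo^2) / 2 + -β * (x₀ - lo))
        + C * (α * (hi^2 - x₀^2) / 2 + β * (hi - x₀)) := add_le_add hp1 hp2
    _ = C * ((b-a) * (((t-r)^2 + (s-t)^2) / 2)) := by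
        rw [hα, hβ, hx₀, hlo, hhi]; field_simp; ring

lemma ibp_half (a b c d r : ℝ) (hba : b - a ≠ 0) (n : ℕ) :
    ∫ x in c..d, ((x - a) / (b - a) - r) * ((n : ℝ) * x ^ (n - 1))
      = ((d - a) / (b - a) - r) * d ^ n - ((c - a) / (b - a) - r) * c ^ n
        - (d ^ (n + 1) - c ^ (n + 1)) / (((n:ℝ) + 1) * (b - a)) := by
  have hu : ∀ x ∈ Set.uIcc c d,
      HasDerivAt (fun x => (x - a) / (b - a) - r) (1 / (b - a)) x := by
    intro x _
    simpa using ((((hasDerivAt_id x).sub_const a).div_const (b - a)).sub_const r)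
  have hv : ∀ x ∈ Set.uIcc c d,
      HasDerivAt (fun x : ℝ => x ^ n) ((n : ℝ) * x ^ (n - 1)) x := by
    intro x _; exact hasDerivAt_pow n x
  have key := intervalIntegral.integral_mul_deriv_eq_deriv_mul hu hv
    ((Continuous.intervalIntegrable continuous_const) c d)
    ((Continuous.intervalIntegrable (by continuity)) c d)
  rw [key]
  have : ∫ x in c..d, 1 / (b - a) * x ^ n = (1 / (b-a)) * ((d ^ (n+1) - c ^ (n+1)) / ((n:ℝ)+1)) := by
    rw [intervalIntegral.integral_const_mul, integral_pow]
  rw [this]; field_simp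

-- rpow lemma: max^(n-1) ≤ (|v|^((n-1)q) + |u|^((n-1)q))^(1/q)
lemma maxpow_le (u v : ℝ) (n : ℕ) (hn : 2 ≤ n) (q : ℝ) (hq : 1 < q) :
    (max |u| |v|) ^ (n - 1) ≤ (|v| ^ (((n:ℝ) - 1) * q) + |u| ^ (((n:ℝ) - 1) * q)) ^ (1/q) := by
  have hq0 : (0:ℝ) < q := by linarith
  set M : ℝ := max |u| |v| with hM
  have hM0 : 0 ≤ M := le_max_iff.2 (Or.inl (abs_nonneg u))
  have hcast : ((n - 1 : ℕ) : ℝ) = (n:ℝ) - 1 := by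
    have : 1 ≤ n := by omega
    push_cast [Nat.cast_sub this]; ring
  have h1 : M ^ (n - 1) = (M ^ (((n:ℝ) - 1) * q)) ^ (1/q) := by
    rw [← Real.rpow_natCast M (n - 1), hcast, ← Real.rpow_mul hM0]
    congr 1
    field_simp
  rw [h1]
  apply Real.rpow_le_rpow (Real.rpow_nonneg hM0 _) _ (by positivity)
  have he : (0:ℝ) ≤ ((n:ℝ) - 1) * q := by
    have : (2:ℝ) ≤ (n:ℝ) := by exact_mod_cast hn
    nlinarith
  rcases max_cases |u| |v| with ⟨h, _⟩ | ⟨h, _⟩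
  · rw [hM, h]
    exact le_add_of_nonneg_left (Real.rpow_nonneg (abs_nonneg v) _)
  · rw [hM, h]
    exact le_add_of_nonneg_right (Real.rpow_nonneg (abs_nonneg u) _)

-- constant lemma
lemma const_ge (p : ℝ) (hp : 1 < p) :
    (5/6 : ℝ) ≤ ((1 + 2 ^ (p + 1)) / (3 * (p + 1))) ^ (1/p) := by
  have hlog : (0.6931471803 : ℝ) < Real.log 2 := Real.log_two_gt_d9
  have h2 : (2:ℝ) ^ (p + 1) ≥ 4 * (1 + (p - 1) * Real.log 2) := by
    have e1 : (2:ℝ) ^ (p + 1) = 2 ^ (p - 1) * 2 ^ (2:ℝ) := by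
      rw [← Real.rpow_add (by norm_num : (0:ℝ) < 2)]; ring_nf
    have e2 : (2:ℝ) ^ (2:ℝ) = 4 := by
      rw [show (2:ℝ) = ((2:ℕ):ℝ) by norm_num, Real.rpow_natCast]; norm_num
    have e3 : (2:ℝ) ^ (p - 1) = Real.exp ((p - 1) * Real.log 2) := by
      rw [Real.rpow_def_of_pos (by norm_num : (0:ℝ) < 2)]; ring_nf
    have e4 : 1 + (p - 1) * Real.log 2 ≤ Real.exp ((p - 1) * Real.log 2) := by
      have := Real.add_one_le_exp ((p - 1) * Real.log 2); linarith
    rw [e1, e2, e3]; nlinarith [Real.exp_pos ((p - 1) * Real.log 2)]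
  have hC : (5/6 : ℝ) ≤ (1 + 2 ^ (p + 1)) / (3 * (p + 1)) := by
    rw [le_div_iff₀ (by linarith : (0:ℝ) < 3 * (p + 1))]
    nlinarith
  have hC0 : (0:ℝ) < (1 + 2 ^ (p + 1)) / (3 * (p + 1)) := by linarith
  set c : ℝ := (1 + 2 ^ (p + 1)) / (3 * (p + 1)) with hc
  rcases le_or_gt 1 c with h1 | h1
  · calc (5/6:ℝ) ≤ 1 := by norm_num
      _ ≤ c ^ (1/p) := Real.one_le_rpow h1 (by positivity)
  · calc (5/6:ℝ) ≤ c := hC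
      _ = c ^ (1:ℝ) := (Real.rpow_one c).symm
      _ ≤ c ^ (1/p) := by
          apply Real.rpow_le_rpow_of_exponent_ge hC0 h1.le
          rw [div_le_one (by linarith : (0:ℝ) < p)]; linarith

theorem stmt_15 (a b : ℝ) (hab : a < b) (n : ℕ) (hn : 2 ≤ n)
    (p q : ℝ) (hp : 1 < p) (hq : 1 < q) (hpq : 1 / p + 1 / q = 1) :
    |(1 / 3) * ((a ^ n + b ^ n) / 2) + (2 / 3) * ((a + b) / 2) ^ n - (b ^ (n + 1) - a ^ (n + 1)) / (((n : ℝ) + 1) * (b - a))|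
      ≤ ((n : ℝ) * (b - a) / 12) * ((1 + 2 ^ (p + 1)) / (3 * (p + 1))) ^ (1 / p)
        * ((|(a + b) / 2| ^ (((n : ℝ) - 1) * q) + |a| ^ (((n : ℝ) - 1) * q)) ^ (1 / q)
        + (|(a + b) / 2| ^ (((n : ℝ) - 1) * q) + |b| ^ (((n : ℝ) - 1) * q)) ^ (1 / q)) := by
  have hba : b - a ≠ 0 := sub_ne_zero.2 hab.ne'
  have hba' : (0:ℝ) < b - a := sub_pos.2 hab
  set m : ℝ := (a + b) / 2 with hm
  have ham : a ≤ m := by rw [hm]; linarith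
  have hmb : m ≤ b := by rw [hm]; linarith
  -- identity
  have h1 := ibp_half a b a m (1/6) hba n
  have h2 := ibp_half a b m b (5/6) hba n
  have hn1 : ((n:ℝ) + 1) ≠ 0 := by positivity
  have hid : (1 / 3) * ((a ^ n + b ^ n) / 2) + (2 / 3) * m ^ n
        - (b ^ (n + 1) - a ^ (n + 1)) / (((n : ℝ) + 1) * (b - a))
      = (∫ x in a..m, ((x - a)/(b-a) - 1/6) * ((n:ℝ) * x^(n-1)))
        + ∫ x in m..b, ((x - a)/(b-a) - 5/6) * ((n:ℝ) * x^(n-1)) := by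
    rw [h1, h2, hm]
    field_simp
    ring
  rw [hid]
  -- bounds on each half
  have hb1 := half_gen a b a m 0 (1/2) hab ham (by norm_num) (by norm_num)
    (by ring) (by rw [hm]; ring) n (1/6) (by norm_num) (by norm_num)
  have hb2 := half_gen a b m b (1/2) 1 hab hmb (by norm_num) (le_refl 1)
    (by rw [hm]; ring) (by ring) n (5/6) (by norm_num) (by norm_num)
  have hcst : ((1/6 - 0:ℝ)^2 + (1/2 - 1/6)^2) / 2 = 5/72 := by norm_num
  have hcst2 : ((5/6 - 1/2:ℝ)^2 + (1 - 5/6)^2) / 2 = 5/72 := by norm_num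
  rw [hcst] at hb1
  rw [hcst2] at hb2
  set M₁ : ℝ := max |a| |m| with hM₁
  set M₂ : ℝ := max |m| |b| with hM₂
  have hM₁0 : 0 ≤ M₁ := le_max_iff.2 (Or.inl (abs_nonneg a))
  have hM₂0 : 0 ≤ M₂ := le_max_iff.2 (Or.inl (abs_nonneg m))
  -- rpow bounds
  have hT1 : M₁ ^ (n - 1) ≤ (|m| ^ (((n:ℝ) - 1) * q) + |a| ^ (((n:ℝ) - 1) * q)) ^ (1/q) :=
    maxpow_le a m n hn q hq
  have hT2 : M₂ ^ (n - 1) ≤ (|m| ^ (((n:ℝ) - 1) * q) + |b| ^ (((n:ℝ) - 1) * q)) ^ (1/q) := by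
    have := maxpow_le b m n hn q hq
    rwa [max_comm] at this
  have hK := const_ge p hp
  set K : ℝ := ((1 + 2 ^ (p + 1)) / (3 * (p + 1))) ^ (1/p) with hKdef
  set T₁ : ℝ := (|m| ^ (((n:ℝ) - 1) * q) + |a| ^ (((n:ℝ) - 1) * q)) ^ (1/q) with hT₁def
  set T₂ : ℝ := (|m| ^ (((n:ℝ) - 1) * q) + |b| ^ (((n:ℝ) - 1) * q)) ^ (1/q) with hT₂def
  calc |(∫ x in a..m, ((x - a)/(b-a) - 1/6) * ((n:ℝ) * x^(n-1)))
        + ∫ x in m..b, ((x - a)/(b-a) - 5/6) * ((n:ℝ) * x^(n-1))|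
      ≤ |∫ x in a..m, ((x - a)/(b-a) - 1/6) * ((n:ℝ) * x^(n-1))|
        + |∫ x in m..b, ((x - a)/(b-a) - 5/6) * ((n:ℝ) * x^(n-1))| := abs_add_le _ _
    _ ≤ (n:ℝ) * M₁^(n-1) * ((b-a) * (5/72)) + (n:ℝ) * M₂^(n-1) * ((b-a) * (5/72)) :=
        add_le_add hb1 hb2
    _ = ((n:ℝ) * (b - a) / 12) * (5/6) * (M₁^(n-1) + M₂^(n-1)) := by ring
    _ ≤ ((n:ℝ) * (b - a) / 12) * K * (T₁ + T₂) := by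
        apply mul_le_mul
        · exact mul_le_mul_of_nonneg_left hK (by positivity)
        · exact add_le_add hT1 hT2
        · positivity
        · positivity
end

section
/- Let a, b ∈ ℝ with a < b, let n ∈ ℕ with n ≥ 2, and let p, q > 1 with 1/p + 1/q = 1. Then |Aⁿ(a,b) - L_n^n(a,b)| ≤ (n(b-a)/4)(1/(p+1))^{1/p} · [(|A(a,b)|^{(n-1)q} + |a|^{(n-1)q})^{1/q} + (|A(a,b)|^{(n-1)q} + |b|^{(n-1)q})^{1/q}]. -/
open Real Finset

theorem auxA (x y : ℝ) (k : ℕ) :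
    |x ^ k - y ^ k| ≤ k * max |x| |y| ^ (k - 1) * |x - y| := by
  induction k with
  | zero => simp
  | succ k ih =>
    set M := max |x| |y| with hM
    have hxM : |x| ≤ M := le_max_left _ _
    have hyM : |y| ≤ M := le_max_right _ _
    have hM0 : 0 ≤ M := le_trans (abs_nonneg x) hxM
    have key : x ^ (k+1) - y ^ (k+1) = x * (x ^ k - y ^ k) + (x - y) * y ^ k := by ring
    calc |x ^ (k+1) - y ^ (k+1)| ≤ |x| * |x ^ k - y ^ k| + |x - y| * |y| ^ k := by
          rw [key]
          refine (abs_add_le _ _).trans ?_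
          rw [abs_mul, abs_mul, abs_pow]
      _ ≤ M * (k * M ^ (k-1) * |x - y|) + |x - y| * M ^ k := by
          gcongr
      _ ≤ (k+1 : ℕ) * M ^ ((k+1) - 1) * |x - y| := by
          rcases Nat.eq_zero_or_pos k with hk | hk
          · subst hk; simp
          · have : M * M ^ (k - 1) = M ^ k := by
              rw [← pow_succ']
              congr 1
              omega
            have h2 : M * (↑k * M ^ (k-1) * |x - y|) = ↑k * M ^ k * |x - y| := by
              rw [← this]; ring
            push_cast
            rw [h2]
            nlinarith [abs_nonneg (x - y), pow_nonneg hM0 k]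

theorem auxB (x y : ℝ) (n : ℕ) :
    |((n : ℝ) + 1) * x ^ n * (y - x) - (y ^ (n+1) - x ^ (n+1))| ≤
      (n : ℝ) * ((n : ℝ) + 1) / 2 * max |x| |y| ^ (n - 1) * (y - x) ^ 2 := by
  set M := max |x| |y| with hM
  have hxM : |x| ≤ M := le_max_left _ _
  have hyM : |y| ≤ M := le_max_right _ _
  have hM0 : 0 ≤ M := le_trans (abs_nonneg x) hxM
  have geom : (∑ i ∈ range (n+1), y ^ i * x ^ (n - i)) * (y - x) = y ^ (n+1) - x ^ (n+1) := by
    have := geom_sum₂_mul y x (n+1)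
    simpa using this
  have ident : ((n : ℝ) + 1) * x ^ n * (y - x) - (y ^ (n+1) - x ^ (n+1))
      = (y - x) * ∑ i ∈ range (n+1), x ^ (n - i) * (x ^ i - y ^ i) := by
    have h : ∀ i ∈ range (n+1), x ^ (n-i) * (x ^ i - y ^ i) = x ^ n - y ^ i * x ^ (n - i) := by
      intro i hi
      have hin : i ≤ n := by simpa [Nat.lt_succ_iff] using hi
      have : x ^ (n - i) * x ^ i = x ^ n := by
        rw [← pow_add]; congr 1; omega
      nlinarith [this]
    have hs : ∑ i ∈ range (n+1), x ^ (n-i) * (x ^ i - y ^ i)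
        = ((n : ℝ) + 1) * x ^ n - ∑ i ∈ range (n+1), y ^ i * x ^ (n - i) := by
      rw [Finset.sum_congr rfl h, Finset.sum_sub_distrib, Finset.sum_const, card_range]
      push_cast
      ring
    rw [← geom, hs]
    ring
  rw [ident, abs_mul]
  have hbound : |∑ i ∈ range (n+1), x ^ (n - i) * (x ^ i - y ^ i)|
      ≤ (n : ℝ) * ((n : ℝ) + 1) / 2 * M ^ (n - 1) * |y - x| := by
    calc |∑ i ∈ range (n+1), x ^ (n - i) * (x ^ i - y ^ i)|
        ≤ ∑ i ∈ range (n+1), |x ^ (n - i) * (x ^ i - y ^ i)| := Finset.abs_sum_le_sum_abs _ _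
      _ ≤ ∑ i ∈ range (n+1), (i : ℝ) * M ^ (n - 1) * |y - x| := by
          apply Finset.sum_le_sum
          intro i hi
          have hin : i ≤ n := by simpa [Nat.lt_succ_iff] using hi
          rcases Nat.eq_zero_or_pos i with h0 | h0
          · subst h0; simp
          · rw [abs_mul, abs_pow]
            have h1 : |x ^ i - y ^ i| ≤ i * M ^ (i - 1) * |x - y| := auxA x y i
            have hpow : M ^ (n - i) * M ^ (i - 1) = M ^ (n - 1) := by
              rw [← pow_add]; congr 1; omega
            calc |x| ^ (n - i) * |x ^ i - y ^ i|
                ≤ M ^ (n - i) * ((i : ℝ) * M ^ (i - 1) * |x - y|) := by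
                  gcongr <;> first | exact abs_nonneg x | skip
              _ = (i : ℝ) * M ^ (n - 1) * |y - x| := by
                  rw [← hpow, abs_sub_comm]; ring
      _ = (n : ℝ) * ((n : ℝ) + 1) / 2 * M ^ (n - 1) * |y - x| := by
          rw [← Finset.sum_mul, ← Finset.sum_mul]
          congr 2
          have gauss : ∀ m : ℕ, (∑ i ∈ range (m+1), (i : ℝ)) = m * (m+1) / 2 := by
            intro m
            induction m with
            | zero => simp
            | succ k ih => rw [Finset.sum_range_succ, ih]; push_cast; ring
          rw [gauss n]
  calc |y - x| * |∑ i ∈ range (n+1), x ^ (n - i) * (x ^ i - y ^ i)|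
      ≤ |y - x| * ((n : ℝ) * ((n : ℝ) + 1) / 2 * M ^ (n - 1) * |y - x|) := by
        gcongr
    _ = (n : ℝ) * ((n : ℝ) + 1) / 2 * M ^ (n - 1) * (y - x) ^ 2 := by
        have h3 : |y - x| * |y - x| = (y - x) ^ 2 := by rw [abs_mul_abs_self]; ring
        linear_combination ((n : ℝ) * ((n : ℝ) + 1) / 2 * M ^ (n - 1)) * h3

theorem auxC (p : ℝ) (hp : 1 < p) : (1:ℝ)/2 ≤ (1/(p+1)) ^ (1/p : ℝ) := by
  have hp0 : (0:ℝ) < p := lt_trans one_pos hp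
  have hbern : p + 1 ≤ (2:ℝ) ^ p := by
    have h := one_add_mul_self_le_rpow_one_add (by norm_num : (-1:ℝ) ≤ 1) hp.le
    norm_num at h
    linarith
  have h2p : (0:ℝ) < (2:ℝ) ^ p := rpow_pos_of_pos two_pos p
  have hdiv : (1:ℝ)/(2:ℝ)^p ≤ 1/(p+1) := by
    apply one_div_le_one_div_of_le (by linarith) hbern
  have hmono := rpow_le_rpow (by positivity) hdiv (by positivity : (0:ℝ) ≤ 1/p)
  have heq : ((1:ℝ)/(2:ℝ)^p) ^ (1/p : ℝ) = 1/2 := by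
    rw [one_div ((2:ℝ)^p), ← rpow_neg (by norm_num : (0:ℝ) ≤ 2),
      ← rpow_mul (by norm_num : (0:ℝ) ≤ 2)]
    have : -p * (1/p) = -1 := by field_simp
    rw [this, rpow_neg_one]
    norm_num
  rw [← heq]
  exact hmono

-- max |u| |v| ^ (n-1) ≤ (|u|^((n-1)q) + |v|^((n-1)q))^(1/q)
theorem auxD (u v : ℝ) (n : ℕ) (hn : 2 ≤ n) (q : ℝ) (hq : 1 < q) :
    max |u| |v| ^ (n - 1) ≤ (|u| ^ (((n:ℝ)-1)*q) + |v| ^ (((n:ℝ)-1)*q)) ^ (1/q : ℝ) := by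
  set M := max |u| |v| with hM
  have hM0 : (0:ℝ) ≤ M := le_trans (abs_nonneg u) (le_max_left _ _)
  have hq0 : (0:ℝ) < q := lt_trans one_pos hq
  set s : ℝ := ((n:ℝ)-1)*q with hs
  have hMs : M ^ s ≤ |u| ^ s + |v| ^ s := by
    rcases le_total |u| |v| with h | h
    · rw [hM, max_eq_right h]
      exact le_add_of_nonneg_left (rpow_nonneg (abs_nonneg u) s)
    · rw [hM, max_eq_left h]
      exact le_add_of_nonneg_right (rpow_nonneg (abs_nonneg v) s)
  have hmono := rpow_le_rpow (rpow_nonneg hM0 s) hMs (by positivity : (0:ℝ) ≤ 1/q)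
  have heq : (M ^ s) ^ (1/q : ℝ) = M ^ (n - 1) := by
    rw [← rpow_natCast M (n-1), ← rpow_mul hM0]
    congr 1
    have : ((n - 1 : ℕ) : ℝ) = (n:ℝ) - 1 := by
      push_cast [Nat.cast_sub (by omega : 1 ≤ n)]
      ring
    rw [this, hs]
    field_simp
  rw [← heq]
  exact hmono

theorem stmt_16 (a b : ℝ) (hab : a < b) (n : ℕ) (hn : 2 ≤ n)
    (p q : ℝ) (hp : 1 < p) (hq : 1 < q) (hpq : 1 / p + 1 / q = 1) :
    |((a + b) / 2) ^ n - (b ^ (n + 1) - a ^ (n + 1)) / (((n : ℝ) + 1) * (b - a))|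
      ≤ ((n : ℝ) * (b - a) / 4) * (1 / (p + 1)) ^ (1 / p)
        * ((|(a + b) / 2| ^ (((n : ℝ) - 1) * q) + |a| ^ (((n : ℝ) - 1) * q)) ^ (1 / q)
        + (|(a + b) / 2| ^ (((n : ℝ) - 1) * q) + |b| ^ (((n : ℝ) - 1) * q)) ^ (1 / q)) := by
  have hba : (0:ℝ) < b - a := sub_pos.mpr hab
  set A : ℝ := (a + b) / 2 with hA
  set M1 : ℝ := max |A| |a| with hM1
  set M2 : ℝ := max |A| |b| with hM2
  have hM10 : (0:ℝ) ≤ M1 := le_trans (abs_nonneg A) (le_max_left _ _)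
  have hM20 : (0:ℝ) ≤ M2 := le_trans (abs_nonneg A) (le_max_left _ _)
  have hB1 := auxB A a n
  have hB2 := auxB A b n
  have hsq1 : (a - A) ^ 2 = (b - a) ^ 2 / 4 := by rw [hA]; ring
  have hsq2 : (b - A) ^ 2 = (b - a) ^ 2 / 4 := by rw [hA]; ring
  rw [hsq1] at hB1
  rw [hsq2] at hB2
  have hden : (0:ℝ) < ((n:ℝ)+1)*(b-a) := by positivity
  have hrw : A ^ n - (b ^ (n+1) - a ^ (n+1)) / (((n:ℝ)+1)*(b-a))
      = (((n:ℝ)+1) * A ^ n * (b-a) - (b ^ (n+1) - a ^ (n+1))) / (((n:ℝ)+1)*(b-a)) := by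
    field_simp
  rw [hrw, abs_div, abs_of_pos hden, div_le_iff₀ hden]
  have hE : ((n:ℝ)+1) * A ^ n * (b-a) - (b ^ (n+1) - a ^ (n+1))
      = (((n:ℝ)+1) * A ^ n * (b - A) - (b ^ (n+1) - A ^ (n+1)))
        - (((n:ℝ)+1) * A ^ n * (a - A) - (a ^ (n+1) - A ^ (n+1))) := by
    ring
  have habs : |((n:ℝ)+1) * A ^ n * (b-a) - (b ^ (n+1) - a ^ (n+1))|
      ≤ (n:ℝ) * ((n:ℝ)+1) / 2 * (M1 ^ (n-1) + M2 ^ (n-1)) * ((b-a)^2/4) := by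
    rw [hE]
    calc |(((n:ℝ)+1) * A ^ n * (b - A) - (b ^ (n+1) - A ^ (n+1)))
        - (((n:ℝ)+1) * A ^ n * (a - A) - (a ^ (n+1) - A ^ (n+1)))|
        ≤ |((n:ℝ)+1) * A ^ n * (b - A) - (b ^ (n+1) - A ^ (n+1))|
          + |((n:ℝ)+1) * A ^ n * (a - A) - (a ^ (n+1) - A ^ (n+1))| := abs_sub _ _
      _ ≤ (n:ℝ) * ((n:ℝ)+1) / 2 * M2 ^ (n-1) * ((b-a)^2/4)
          + (n:ℝ) * ((n:ℝ)+1) / 2 * M1 ^ (n-1) * ((b-a)^2/4) := add_le_add hB2 hB1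
      _ = (n:ℝ) * ((n:ℝ)+1) / 2 * (M1 ^ (n-1) + M2 ^ (n-1)) * ((b-a)^2/4) := by ring
  refine habs.trans ?_
  -- now the RHS side
  have hC := auxC p hp
  have hD1 := auxD A a n hn q hq
  have hD2 := auxD A b n hn q hq
  set T1 : ℝ := (|A| ^ (((n:ℝ)-1)*q) + |a| ^ (((n:ℝ)-1)*q)) ^ (1/q : ℝ) with hT1
  set T2 : ℝ := (|A| ^ (((n:ℝ)-1)*q) + |b| ^ (((n:ℝ)-1)*q)) ^ (1/q : ℝ) with hT2
  have hT10 : (0:ℝ) ≤ T1 := rpow_nonneg (by positivity) _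
  have hT20 : (0:ℝ) ≤ T2 := rpow_nonneg (by positivity) _
  have key : (n:ℝ) * ((n:ℝ)+1) / 2 * (M1 ^ (n-1) + M2 ^ (n-1)) * ((b-a)^2/4)
      = ((n:ℝ) * (b-a) / 4) * (1/2) * (M1 ^ (n-1) + M2 ^ (n-1)) * (((n:ℝ)+1)*(b-a)) := by
    ring
  rw [key]
  have hstep : ((n:ℝ) * (b-a) / 4) * (1/2) * (M1 ^ (n-1) + M2 ^ (n-1))
      ≤ ((n:ℝ) * (b-a) / 4) * ((1/(p+1)) ^ (1/p : ℝ)) * (T1 + T2) := by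
    have h1 : M1 ^ (n-1) + M2 ^ (n-1) ≤ T1 + T2 := add_le_add hD1 hD2
    have hfac : (0:ℝ) ≤ (n:ℝ) * (b-a) / 4 := by positivity
    have hMsum : (0:ℝ) ≤ M1 ^ (n-1) + M2 ^ (n-1) := by positivity
    calc ((n:ℝ) * (b-a) / 4) * (1/2) * (M1 ^ (n-1) + M2 ^ (n-1))
        ≤ ((n:ℝ) * (b-a) / 4) * ((1/(p+1)) ^ (1/p : ℝ)) * (M1 ^ (n-1) + M2 ^ (n-1)) := by
          gcongr
      _ ≤ ((n:ℝ) * (b-a) / 4) * ((1/(p+1)) ^ (1/p : ℝ)) * (T1 + T2) := by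
          gcongr
  exact mul_le_mul_of_nonneg_right hstep hden.le
end

section
/- Let a, b ∈ ℝ with a < b, let n ∈ ℕ with n ≥ 2, and let p, q > 1 with 1/p + 1/q = 1. Then |A(aⁿ, bⁿ) - L_n^n(a,b)| ≤ (n(b-a)/4)(1/(p+1))^{1/p} · [(|A(a,b)|^{(n-1)q} + |a|^{(n-1)q})^{1/q} + (|A(a,b)|^{(n-1)q} + |b|^{(n-1)q})^{1/q}]. -/
/-!
Integrating by parts against `x - (a + b) / 2` writes `A(aⁿ, bⁿ) - L_nⁿ(a, b)` as
`n / (b - a) * ∫ₐᵇ (x - (a + b) / 2) xⁿ⁻¹ dx`. Bounding the convex function `|x|ⁿ⁻¹` by its chord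
and integrating `|x - (a + b) / 2|` against that chord gives the sharper estimate
`n (b - a) (|a|ⁿ⁻¹ + |b|ⁿ⁻¹) / 8`. The stated bound follows from it, since
`(1 / (p + 1)) ^ (1 / p) ≥ 1 / 2` by Bernoulli's inequality `2 ^ p ≥ p + 1`, and each `q`-power
sum on the right dominates `|a|ⁿ⁻¹`, resp. `|b|ⁿ⁻¹`.
-/

open Real MeasureTheory intervalIntegral Set

lemma integral_sub_midpoint_mul_deriv {f f' : ℝ → ℝ} {a b : ℝ}
    (hf : ∀ x ∈ uIcc a b, HasDerivAt f (f' x) x) (hf' : IntervalIntegrable f' volume a b) :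
    ∫ x in a..b, (x - (a + b) / 2) * f' x = (b - a) * (f a + f b) / 2 - ∫ x in a..b, f x := by
  rw [integral_mul_deriv_eq_deriv_mul (fun x _ => (hasDerivAt_id' x).sub_const _) hf
    intervalIntegrable_const hf']
  simp only [one_mul]
  ring

lemma pow_trapezoid_sub_average_eq {a b : ℝ} (hab : a ≠ b) (n : ℕ) :
    (a ^ n + b ^ n) / 2 - (b ^ (n + 1) - a ^ (n + 1)) / ((n + 1) * (b - a))
      = (∫ x in a..b, (x - (a + b) / 2) * (n * x ^ (n - 1))) / (b - a) := by
  have hba : b - a ≠ 0 := sub_ne_zero.2 hab.symm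
  have hderiv : Continuous fun x : ℝ => (n : ℝ) * x ^ (n - 1) := by fun_prop
  rw [integral_sub_midpoint_mul_deriv (fun x _ => hasDerivAt_pow n x)
    (hderiv.intervalIntegrable a b), integral_pow]
  field_simp

lemma integral_quadratic (c₂ c₁ c₀ u v : ℝ) :
    ∫ x in u..v, (c₂ * x ^ 2 + c₁ * x + c₀)
      = c₂ * (v ^ 3 - u ^ 3) / 3 + c₁ * (v ^ 2 - u ^ 2) / 2 + c₀ * (v - u) := by
  have hF : ∀ x ∈ uIcc u v, HasDerivAt (fun x => c₂ / 3 * x ^ 3 + c₁ / 2 * x ^ 2 + c₀ * x)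
      (c₂ * x ^ 2 + c₁ * x + c₀) x := fun x _ =>
    ((((hasDerivAt_pow 3 x).const_mul (c₂ / 3)).add ((hasDerivAt_pow 2 x).const_mul (c₁ / 2))).add
      ((hasDerivAt_id' x).const_mul c₀)).congr_deriv (by push_cast; ring)
  rw [integral_eq_sub_of_hasDerivAt hF (Continuous.intervalIntegrable (by fun_prop) _ _)]
  ring

lemma integral_abs_sub_midpoint_mul_affine {a b : ℝ} (hab : a ≤ b) (A B : ℝ) :
    ∫ x in a..b, |x - (a + b) / 2| * ((b - x) * A + (x - a) * B) = (b - a) ^ 3 * (A + B) / 8 := by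
  set m := (a + b) / 2 with hm
  have ham : a ≤ m := by linarith
  have hmb : m ≤ b := by linarith
  have hcont : Continuous fun x => |x - m| * ((b - x) * A + (x - a) * B) := by fun_prop
  have hleft : ∫ x in a..m, |x - m| * ((b - x) * A + (x - a) * B)
      = ∫ x in a..m, ((A - B) * x ^ 2 + ((m + a) * B - (m + b) * A) * x + m * (b * A - a * B)) :=
    integral_congr fun x hx => by
      rw [uIcc_of_le ham] at hx
      simp only [abs_of_nonpos (sub_nonpos.2 hx.2)]
      ring
  have hright : ∫ x in m..b, |x - m| * ((b - x) * A + (x - a) * B)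
      = ∫ x in m..b, ((B - A) * x ^ 2 + ((m + b) * A - (m + a) * B) * x + m * (a * B - b * A)) :=
    integral_congr fun x hx => by
      rw [uIcc_of_le hmb] at hx
      simp only [abs_of_nonneg (sub_nonneg.2 hx.1)]
      ring
  rw [← integral_add_adjacent_intervals (hcont.intervalIntegrable a m)
    (hcont.intervalIntegrable m b), hleft, hright, integral_quadratic, integral_quadratic, hm]
  ring

lemma abs_integral_sub_midpoint_mul_le {g : ℝ → ℝ} {a b A B : ℝ} (hab : a < b)
    (hg : IntervalIntegrable g volume a b)
    (hg_le : ∀ x ∈ Ioo a b, (b - a) * |g x| ≤ (b - x) * A + (x - a) * B) :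
    |∫ x in a..b, (x - (a + b) / 2) * g x| ≤ (b - a) ^ 2 * (A + B) / 8 := by
  have hba : 0 < b - a := sub_pos.2 hab
  calc |∫ x in a..b, (x - (a + b) / 2) * g x|
      ≤ ∫ x in a..b, |(x - (a + b) / 2) * g x| := abs_integral_le_integral_abs hab.le
    _ ≤ ∫ x in a..b, |x - (a + b) / 2| * ((b - x) * A + (x - a) * B) / (b - a) := by
      refine integral_mono_on_of_le_Ioo hab.le
        (hg.continuousOn_mul (by fun_prop)).abs (Continuous.intervalIntegrable (by fun_prop) _ _)
        fun x hx => ?_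
      rw [abs_mul, mul_div_assoc]
      exact mul_le_mul_of_nonneg_left ((le_div_iff₀' hba).2 (hg_le x hx)) (abs_nonneg _)
    _ = (b - a) ^ 2 * (A + B) / 8 := by
      rw [intervalIntegral.integral_div, integral_abs_sub_midpoint_mul_affine hab.le]
      field_simp

theorem abs_pow_trapezoid_sub_average_le {a b : ℝ} (hab : a < b) (n : ℕ) :
    |(a ^ n + b ^ n) / 2 - (b ^ (n + 1) - a ^ (n + 1)) / ((n + 1) * (b - a))|
      ≤ n * (b - a) * (|a| ^ (n - 1) + |b| ^ (n - 1)) / 8 := by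
  have hba : 0 < b - a := sub_pos.2 hab
  have hconv : ConvexOn ℝ univ fun x : ℝ => |x| ^ (n - 1) :=
    convexOn_univ_norm.pow (fun _ _ => norm_nonneg _) _
  have hchord : ∀ x ∈ Ioo a b, (b - a) * |n * x ^ (n - 1)|
      ≤ (b - x) * (n * |a| ^ (n - 1)) + (x - a) * (n * |b| ^ (n - 1)) := fun x hx => by
    rw [abs_mul, abs_pow, Nat.abs_cast]
    linear_combination (n : ℝ) * hconv.secant_mono_aux1 trivial trivial hx.1 hx.2
  rw [pow_trapezoid_sub_average_eq hab.ne, abs_div, abs_of_pos hba, div_le_iff₀ hba]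
  calc _ ≤ (b - a) ^ 2 * (n * |a| ^ (n - 1) + n * |b| ^ (n - 1)) / 8 :=
        abs_integral_sub_midpoint_mul_le hab (Continuous.intervalIntegrable (by fun_prop) _ _) hchord
    _ = _ := by ring

lemma half_le_one_div_add_one_rpow_one_div {p : ℝ} (hp : 1 ≤ p) :
    1 / 2 ≤ (1 / (p + 1)) ^ (1 / p) := by
  have hbernoulli : p + 1 ≤ 2 ^ p := by
    have := one_add_mul_self_le_rpow_one_add (s := 1) (by norm_num) hp
    norm_num at this
    linarith
  calc (1 / 2 : ℝ) = ((1 / 2) ^ p) ^ (1 / p) := by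
        rw [← rpow_mul (by norm_num), mul_one_div_cancel (by positivity), rpow_one]
    _ ≤ (1 / (p + 1)) ^ (1 / p) := by
        gcongr
        rw [div_rpow zero_le_one zero_le_two, one_rpow]
        gcongr

lemma le_rpow_add_rpow_one_div {u v q : ℝ} (hu : 0 ≤ u) (hv : 0 ≤ v) (hq : 0 < q) :
    v ≤ (u ^ q + v ^ q) ^ (1 / q) := by
  calc v = (v ^ q) ^ (1 / q) := by rw [← rpow_mul hv, mul_one_div_cancel hq.ne', rpow_one]
    _ ≤ (u ^ q + v ^ q) ^ (1 / q) := by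
        gcongr
        exact le_add_of_nonneg_left (rpow_nonneg hu _)

theorem stmt_17_general (a b : ℝ) (hab : a < b) (n : ℕ) (hn : 2 ≤ n)
    (p q : ℝ) (hp : 1 < p) (hq : 1 < q) :
    |(a ^ n + b ^ n) / 2 - (b ^ (n + 1) - a ^ (n + 1)) / (((n : ℝ) + 1) * (b - a))|
      ≤ ((n : ℝ) * (b - a) / 4) * (1 / (p + 1)) ^ (1 / p)
        * ((|(a + b) / 2| ^ (((n : ℝ) - 1) * q) + |a| ^ (((n : ℝ) - 1) * q)) ^ (1 / q)
        + (|(a + b) / 2| ^ (((n : ℝ) - 1) * q) + |b| ^ (((n : ℝ) - 1) * q)) ^ (1 / q)) := by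
  have hexp : (n : ℝ) - 1 = ((n - 1 : ℕ) : ℝ) := (Nat.cast_pred (by omega)).symm
  have hpow_le : ∀ x y : ℝ,
      |x| ^ (n - 1) ≤ (|y| ^ (((n : ℝ) - 1) * q) + |x| ^ (((n : ℝ) - 1) * q)) ^ (1 / q) := by
    intro x y
    rw [hexp, rpow_mul (abs_nonneg y), rpow_mul (abs_nonneg x), rpow_natCast, rpow_natCast]
    exact le_rpow_add_rpow_one_div (by positivity) (by positivity) (by linarith)
  calc _ ≤ n * (b - a) * (|a| ^ (n - 1) + |b| ^ (n - 1)) / 8 :=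
        abs_pow_trapezoid_sub_average_le hab n
    _ = (n * (b - a) / 4) * (1 / 2) * (|a| ^ (n - 1) + |b| ^ (n - 1)) := by ring
    _ ≤ _ := by
        gcongr
        · exact half_le_one_div_add_one_rpow_one_div hp.le
        · exact hpow_le a _
        · exact hpow_le b _

theorem stmt_17 (a b : ℝ) (hab : a < b) (n : ℕ) (hn : 2 ≤ n)
    (p q : ℝ) (hp : 1 < p) (hq : 1 < q) (hpq : 1 / p + 1 / q = 1) :
    |(a ^ n + b ^ n) / 2 - (b ^ (n + 1) - a ^ (n + 1)) / (((n : ℝ) + 1) * (b - a))|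
      ≤ ((n : ℝ) * (b - a) / 4) * (1 / (p + 1)) ^ (1 / p)
        * ((|(a + b) / 2| ^ (((n : ℝ) - 1) * q) + |a| ^ (((n : ℝ) - 1) * q)) ^ (1 / q)
        + (|(a + b) / 2| ^ (((n : ℝ) - 1) * q) + |b| ^ (((n : ℝ) - 1) * q)) ^ (1 / q)) :=
  stmt_17_general a b hab n hn p q hp hq
end
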